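/- arXiv:2602.18597 — 3 statements merged into one kernel-verified Lean document; each statement's English description precedes it below -/
import Mathlib

section
/- Let (b,o,c) be a magnetic Schrödinger graph over a discrete measure space (X,m) and let d be an intrinsic pseudometric for b with finite jump size s > 0. Then there exists a constant C > 0, depending only on s, such that for all δ > 0, all ε ∈ (0,1), every bounded function ψ : X → ℝ with |ψ(x) − ψ(y)| ≤ ε·d(x,y) for all x,y, and every finitely supported f : X → ℂ: |Q(e^{−ψ}f, e^{ψ}f) − Q(f,f)| ≤ C·ε²·(1 + 1/δ)·∑_{x∈X} m(x)|f(x)|² + δ·(Q(f,f) + ∑_{x∈X} c₋(x)|f(x)|²). -/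
/-- The sesquilinear form of a magnetic Schrödinger graph:
`Q(f,g) = (1/2)∑_{x,y} b(x,y)(f(x) − o(x,y)f(y))·conj(g(x) − o(x,y)g(y))
          + ∑_x c(x) f(x)·conj(g(x))`. -/
noncomputable def qForm {X : Type*} (b : X → X → ℝ) (o : X → X → ℂ) (c : X → ℝ)
    (f g : X → ℂ) : ℂ :=
  (1 / 2 : ℂ) * ∑' z : X × X, (b z.1 z.2 : ℂ) *
      ((f z.1 - o z.1 z.2 * f z.2) * (starRingEnd ℂ) (g z.1 - o z.1 z.2 * g z.2)) +
    ∑' x, (c x : ℂ) * (f x * (starRingEnd ℂ) (g x))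


lemma st12_abs_exp_sub_one_le (x : ℝ) : |Real.exp x - 1| ≤ |x| * Real.exp |x| := by
  rcases le_or_gt 0 x with hx | hx
  · have h1 : 1 ≤ Real.exp x := Real.one_le_exp hx
    rw [abs_of_nonneg hx, abs_of_nonneg (by linarith)]
    have h := Real.add_one_le_exp (-x)
    have hmul : Real.exp (-x) * Real.exp x = 1 := by rw [← Real.exp_add]; simp
    have hp := Real.exp_pos x
    nlinarith
  · have h1 : Real.exp x ≤ 1 := by
      rw [← Real.exp_zero]; exact Real.exp_le_exp.mpr hx.le
    rw [abs_of_nonpos (by linarith), abs_of_neg hx]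
    have h2 := Real.add_one_le_exp x
    have h3 : 1 ≤ Real.exp (-x) := Real.one_le_exp (by linarith)
    nlinarith

lemma st12_cosh_bound (t s : ℝ) (ht : |t| ≤ s) :
    Real.exp t + Real.exp (-t) - 2 ≤ t ^ 2 * Real.exp (3 * s) := by
  have h1 : Real.exp t * Real.exp (-t) = 1 := by rw [← Real.exp_add]; simp
  have hid : Real.exp t + Real.exp (-t) - 2 = (Real.exp t - 1) ^ 2 * Real.exp (-t) := by
    linear_combination (2 - Real.exp t) * h1
  have hts : -s ≤ t ∧ t ≤ s := abs_le.mp ht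
  have h2 : |Real.exp t - 1| ≤ |t| * Real.exp s :=
    (st12_abs_exp_sub_one_le t).trans
      (mul_le_mul_of_nonneg_left (Real.exp_le_exp.mpr ht) (abs_nonneg t))
  have h3 : (Real.exp t - 1) ^ 2 ≤ t ^ 2 * Real.exp s ^ 2 := by
    have := mul_self_le_mul_self (abs_nonneg (Real.exp t - 1)) h2
    have hsq : |Real.exp t - 1| * |Real.exp t - 1| = (Real.exp t - 1) ^ 2 := by
      rw [← abs_mul, abs_mul_self]; ring
    nlinarith [sq_abs t]
  have h4 : Real.exp (-t) ≤ Real.exp s := Real.exp_le_exp.mpr (by linarith [hts.1])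
  have h5 : Real.exp (3 * s) = Real.exp s ^ 2 * Real.exp s := by
    rw [show (3:ℝ) * s = (s + s) + s by ring, Real.exp_add, Real.exp_add]; ring
  rw [hid, h5]
  have hexp : (0:ℝ) < Real.exp (-t) := Real.exp_pos _
  nlinarith [sq_nonneg t, Real.exp_pos s, sq_nonneg (Real.exp s)]

lemma st12_sinh_bound (t s : ℝ) (ht : |t| ≤ s) :
    |Real.exp t - Real.exp (-t)| ≤ 2 * |t| * Real.exp s := by
  have h1 : |Real.exp t - Real.exp (-t)| ≤ |Real.exp t - 1| + |1 - Real.exp (-t)| :=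
    abs_sub_le _ 1 _
  have h2 : |Real.exp t - 1| ≤ |t| * Real.exp s :=
    (st12_abs_exp_sub_one_le t).trans
      (mul_le_mul_of_nonneg_left (Real.exp_le_exp.mpr ht) (abs_nonneg t))
  have h3 : |1 - Real.exp (-t)| ≤ |t| * Real.exp s := by
    rw [abs_sub_comm]
    have := st12_abs_exp_sub_one_le (-t)
    rw [abs_neg] at this
    exact this.trans (mul_le_mul_of_nonneg_left (Real.exp_le_exp.mpr ht) (abs_nonneg t))
  linarith


lemma st12_key_ineq (s δ t : ℝ) (hδ : 0 < δ) (ht : |t| ≤ s) (a β : ℂ) :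
    ‖((Real.exp (-t) : ℂ) * a - β) * (starRingEnd ℂ) ((Real.exp t : ℂ) * a - β)
        - (a - β) * (starRingEnd ℂ) (a - β)‖ ≤
      Real.exp (3 * s) * t ^ 2 * ((‖a‖) ^ 2 + (‖β‖) ^ 2) / 2
        + δ / 2 * (‖a - β‖) ^ 2
        + 2 * Real.exp (2 * s) / δ * t ^ 2 * (‖β‖) ^ 2 := by
  set z := ((Real.exp (-t) : ℂ) * a - β) * (starRingEnd ℂ) ((Real.exp t : ℂ) * a - β)
      - (a - β) * (starRingEnd ℂ) (a - β) with hzdef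
  set p := a * (starRingEnd ℂ) β with hpdef
  have h1 : Real.exp (-t) * Real.exp t = 1 := by rw [← Real.exp_add]; simp
  have h1c : ((Real.exp (-t) : ℝ) : ℂ) * ((Real.exp t : ℝ) : ℂ) = 1 := by
    rw [← Complex.ofReal_mul, h1, Complex.ofReal_one]
  have hz : z = ((1 : ℂ) - (Real.exp (-t) : ℂ)) * p
      + ((1 : ℂ) - (Real.exp t : ℂ)) * (starRingEnd ℂ) p := by
    rw [hzdef, hpdef]
    simp only [map_sub, map_mul, Complex.conj_ofReal, RingHomCompTriple.comp_apply,
      RingHom.id_apply, Complex.conj_conj]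
    linear_combination (a * (starRingEnd ℂ) a) * h1c
  have hre : z.re = (2 - Real.exp t - Real.exp (-t)) * p.re := by
    rw [hz]
    simp only [Complex.add_re, Complex.mul_re, Complex.sub_re, Complex.sub_im, Complex.one_re,
      Complex.one_im, Complex.ofReal_re, Complex.ofReal_im, Complex.conj_re, Complex.conj_im]
    ring
  have him : z.im = (Real.exp t - Real.exp (-t)) * p.im := by
    rw [hz]
    simp only [Complex.add_im, Complex.mul_im, Complex.sub_re, Complex.sub_im, Complex.one_re,
      Complex.one_im, Complex.ofReal_re, Complex.ofReal_im, Complex.conj_re, Complex.conj_im]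
    ring
  have hpre : |p.re| ≤ ‖a‖ * ‖β‖ := by
    refine (Complex.abs_re_le_norm p).trans ?_
    rw [hpdef, norm_mul, Complex.norm_conj]
  have hpim : |p.im| ≤ ‖a - β‖ * ‖β‖ := by
    have hdecomp : p = (a - β) * (starRingEnd ℂ) β + (Complex.normSq β : ℂ) := by
      rw [hpdef, ← Complex.mul_conj]; ring
    have : p.im = ((a - β) * (starRingEnd ℂ) β).im := by
      rw [hdecomp]; simp
    rw [this]
    refine (Complex.abs_im_le_norm _).trans ?_
    rw [norm_mul, Complex.norm_conj]
  have habs : ‖z‖ ≤ |z.re| + |z.im| := Complex.norm_le_abs_re_add_abs_im z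
  -- re part
  have hge2 : 2 ≤ Real.exp t + Real.exp (-t) := by
    nlinarith [sq_nonneg (Real.exp t - 1), Real.exp_pos (-t), Real.exp_pos t]
  have hcosh := st12_cosh_bound t s ht
  have hterm1 : |z.re| ≤ Real.exp (3 * s) * t ^ 2 * ((‖a‖) ^ 2 + (‖β‖) ^ 2) / 2 := by
    rw [hre, abs_mul, abs_of_nonpos (by linarith)]
    have hab : ‖a‖ * ‖β‖ ≤ ((‖a‖) ^ 2 + (‖β‖) ^ 2) / 2 := by
      nlinarith [sq_nonneg (‖a‖ - ‖β‖)]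
    have h6 : |p.re| ≤ ((‖a‖) ^ 2 + (‖β‖) ^ 2) / 2 := hpre.trans hab
    have h7 : (0:ℝ) ≤ Real.exp t + Real.exp (-t) - 2 := by linarith
    nlinarith [abs_nonneg p.re, sq_nonneg t, Real.exp_pos (3 * s)]
  -- im part
  have hsinh := st12_sinh_bound t s ht
  have he2s : Real.exp (2 * s) = Real.exp s * Real.exp s := by
    rw [show (2:ℝ) * s = s + s by ring, Real.exp_add]
  have hterm2 : |z.im| ≤ δ / 2 * (‖a - β‖) ^ 2
      + 2 * Real.exp (2 * s) / δ * t ^ 2 * (‖β‖) ^ 2 := by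
    rw [him, abs_mul]
    have step1 : |Real.exp t - Real.exp (-t)| * |p.im|
        ≤ (2 * |t| * Real.exp s) * (‖a - β‖ * ‖β‖) := by
      apply mul_le_mul hsinh hpim (abs_nonneg _)
      positivity
    refine step1.trans ?_
    rw [he2s]
    set X := ‖a - β‖
    set Y := ‖β‖
    have hgoal : 2 * |t| * Real.exp s * (X * Y)
        ≤ (δ ^ 2 * X ^ 2 + 4 * t ^ 2 * Real.exp s ^ 2 * Y ^ 2) / (2 * δ) := by
      rw [le_div_iff₀ (by positivity), ← _root_.sq_abs t]
      nlinarith [sq_nonneg (δ * X - 2 * (|t| * Real.exp s) * Y)]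
    refine hgoal.trans (le_of_eq ?_)
    field_simp
    ring
  linarith


lemma st12_summable_left {X : Type*} (w : X → X → ℝ) (hw : ∀ x y, 0 ≤ w x y)
    (hrow : ∀ x, Summable (w x)) (g : X → ℝ) (hg : ∀ x, 0 ≤ g x)
    (hgfin : (Function.support g).Finite) :
    Summable (fun z : X × X => w z.1 z.2 * g z.1) := by
  rw [summable_prod_of_nonneg (fun z => mul_nonneg (hw _ _) (hg _))]
  refine ⟨fun x => (hrow x).mul_right (g x), ?_⟩
  apply summable_of_ne_finset_zero (s := hgfin.toFinset)
  intro x hx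
  have hx0 : g x = 0 := by
    by_contra h
    exact hx (hgfin.mem_toFinset.mpr h)
  simp [hx0]

lemma st12_summable_right {X : Type*} (w : X → X → ℝ) (hw : ∀ x y, 0 ≤ w x y)
    (hrow : ∀ x, Summable (w x)) (hsym : ∀ x y, w x y = w y x) (g : X → ℝ)
    (hg : ∀ x, 0 ≤ g x) (hgfin : (Function.support g).Finite) :
    Summable (fun z : X × X => w z.1 z.2 * g z.2) := by
  have h := st12_summable_left (fun x y => w y x) (fun x y => hw y x)
    (fun x => (hrow x).congr (fun y => hsym x y)) g hg hgfin
  exact h.prod_symm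

lemma st12_tsum_left_le {X : Type*} (w : X → X → ℝ) (hw : ∀ x y, 0 ≤ w x y)
    (hrow : ∀ x, Summable (w x)) (g : X → ℝ) (hg : ∀ x, 0 ≤ g x)
    (hgfin : (Function.support g).Finite) (m : X → ℝ) (hm : ∀ x, (∑' y, w x y) ≤ m x) :
    ∑' z : X × X, w z.1 z.2 * g z.1 ≤ ∑' x, m x * g x := by
  rw [Summable.tsum_prod' (st12_summable_left w hw hrow g hg hgfin)
    (fun x => (hrow x).mul_right (g x))]
  have hx : ∀ x, (∑' y, w x y * g x) = (∑' y, w x y) * g x := fun x => tsum_mul_right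
  rw [tsum_congr hx]
  apply Summable.tsum_le_tsum
  · exact fun x => mul_le_mul_of_nonneg_right (hm x) (hg x)
  · apply summable_of_ne_finset_zero (s := hgfin.toFinset)
    intro x hx
    have hx0 : g x = 0 := by
      by_contra h
      exact hx (hgfin.mem_toFinset.mpr h)
    simp [hx0]
  · apply summable_of_ne_finset_zero (s := hgfin.toFinset)
    intro x hx
    have hx0 : g x = 0 := by
      by_contra h
      exact hx (hgfin.mem_toFinset.mpr h)
    simp [hx0]

lemma st12_tsum_right_le {X : Type*} (w : X → X → ℝ) (hw : ∀ x y, 0 ≤ w x y)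
    (hrow : ∀ x, Summable (w x)) (hsym : ∀ x y, w x y = w y x) (g : X → ℝ)
    (hg : ∀ x, 0 ≤ g x) (hgfin : (Function.support g).Finite)
    (m : X → ℝ) (hm : ∀ x, (∑' y, w x y) ≤ m x) :
    ∑' z : X × X, w z.1 z.2 * g z.2 ≤ ∑' x, m x * g x := by
  have key : ∑' z : X × X, w z.1 z.2 * g z.2 = ∑' z : X × X, w z.1 z.2 * g z.1 := by
    rw [← Equiv.tsum_eq (Equiv.prodComm X X) (fun z : X × X => w z.1 z.2 * g z.2)]
    exact tsum_congr fun z => by simp [Equiv.prodComm, hsym z.2 z.1]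
  rw [key]
  exact st12_tsum_left_le w hw hrow g hg hgfin m hm


set_option maxHeartbeats 1600000 in
/-- For a magnetic Schrödinger graph with intrinsic pseudometric of jump
size at most `s > 0`, there is `C > 0` (depending only on `s`) such that for all `δ > 0`,
`ε ∈ (0,1)`, every bounded `ε`-Lipschitz `ψ : X → ℝ` and every finitely supported `f`:
`|Q(e^{−ψ}f, e^{ψ}f) − Q(f,f)| ≤ C·ε²(1 + 1/δ)·∑ m|f|² + δ·(Q(f,f) + ∑ c₋|f|²)`. -/
theorem stmt12 {X : Type*} [Countable X] (s : ℝ) (hs : 0 < s) :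
    ∃ C > 0, ∀ m : X → ℝ, (∀ x, 0 < m x) →
      ∀ b : X → X → ℝ, (∀ x y, 0 ≤ b x y) → (∀ x y, b x y = b y x) → (∀ x, b x x = 0) →
        (∀ x, Summable fun y => b x y) →
      ∀ o : X → X → ℂ, (∀ x y, ‖o x y‖ = 1) →
        (∀ x y, o x y = starRingEnd ℂ (o y x)) →
      ∀ c : X → ℝ, ∀ d : X → X → ℝ,
        (∀ x, d x x = 0) → (∀ x y, d x y = d y x) → (∀ x y z, d x z ≤ d x y + d y z) →
        (∀ x, Summable fun y => b x y * d x y ^ 2) →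
        (∀ x, (∑' y, b x y * d x y ^ 2) ≤ m x) →
        (∀ x y, 0 < b x y → d x y ≤ s) →
      ∀ δ : ℝ, 0 < δ → ∀ ε : ℝ, 0 < ε → ε < 1 →
      ∀ ψ : X → ℝ, (∃ B, ∀ x, |ψ x| ≤ B) → (∀ x y, |ψ x - ψ y| ≤ ε * d x y) →
      ∀ f : X → ℂ, (Function.support f).Finite →
        ‖(qForm b o c (fun x => (Real.exp (-ψ x) : ℂ) * f x)
                (fun x => (Real.exp (ψ x) : ℂ) * f x) -
              qForm b o c f f)‖ ≤
          C * ε ^ 2 * (1 + 1 / δ) * (∑' x, m x * ‖f x‖ ^ 2) +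
            δ * ((qForm b o c f f).re + ∑' x, max (-c x) 0 * ‖f x‖ ^ 2) := by
  refine ⟨Real.exp (3 * s), Real.exp_pos _, ?_⟩
  intro m hm b hb hbsym hbdiag hbrow o ho hoconj c d hd0 hdsym hdtri hbd2 hintr hjump
    δ hδ ε hε hε1 ψ hψbd hψlip f hf
  obtain ⟨B, hB⟩ := hψbd
  have hdnonneg : ∀ x y, 0 ≤ d x y := fun x y => by
    have h := hdtri x y x
    rw [hd0, hdsym y x] at h; linarith
  set g : X → ℝ := fun x => ‖f x‖ ^ 2 with hg
  have hgnonneg : ∀ x, 0 ≤ g x := fun x => sq_nonneg _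
  have hgfin : (Function.support g).Finite := by
    apply hf.subset
    intro x hx
    simp only [Function.mem_support, hg] at hx ⊢
    intro h; apply hx; simp [h]
  set u : X → ℂ := fun x => (Real.exp (-ψ x) : ℂ) * f x with hu
  set v : X → ℂ := fun x => (Real.exp (ψ x) : ℂ) * f x with hv
  set F1 : X × X → ℂ := fun z => (b z.1 z.2 : ℂ) *
      ((u z.1 - o z.1 z.2 * u z.2) * (starRingEnd ℂ) (v z.1 - o z.1 z.2 * v z.2)) with hF1
  set F0 : X × X → ℂ := fun z => (b z.1 z.2 : ℂ) *
      ((f z.1 - o z.1 z.2 * f z.2) * (starRingEnd ℂ) (f z.1 - o z.1 z.2 * f z.2)) with hF0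
  -- summability of basic real comparison functions
  have hsumB1 : Summable (fun z : X × X => b z.1 z.2 * g z.1) :=
    st12_summable_left b hb hbrow g hgnonneg hgfin
  have hsumB2 : Summable (fun z : X × X => b z.1 z.2 * g z.2) :=
    st12_summable_right b hb hbrow hbsym g hgnonneg hgfin
  have hwdnonneg : ∀ x y, 0 ≤ b x y * d x y ^ 2 := fun x y =>
    mul_nonneg (hb x y) (sq_nonneg _)
  have hwdsym : ∀ x y, b x y * d x y ^ 2 = b y x * d y x ^ 2 := fun x y => by
    rw [hbsym, hdsym]
  have hsumA : Summable (fun z : X × X => b z.1 z.2 * d z.1 z.2 ^ 2 * g z.1) :=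
    st12_summable_left (fun x y => b x y * d x y ^ 2) hwdnonneg hbd2 g hgnonneg hgfin
  have hsumA' : Summable (fun z : X × X => b z.1 z.2 * d z.1 z.2 ^ 2 * g z.2) :=
    st12_summable_right (fun x y => b x y * d x y ^ 2) hwdnonneg hbd2 hwdsym g hgnonneg hgfin
  -- the E function
  set E : X × X → ℝ := fun z => b z.1 z.2 * ‖f z.1 - o z.1 z.2 * f z.2‖ ^ 2
    with hE
  have hEnonneg : ∀ z, 0 ≤ E z := fun z => mul_nonneg (hb _ _) (sq_nonneg _)
  have habs_sub : ∀ x y : X, ‖f x - o x y * f y‖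
      ≤ ‖f x‖ + ‖f y‖ := by
    intro x y
    calc ‖f x - o x y * f y‖
        ≤ ‖f x‖ + ‖o x y * f y‖ := by
          exact norm_sub_le _ _
      _ = ‖f x‖ + ‖f y‖ := by rw [norm_mul, ho, one_mul]
  have hEle : ∀ z : X × X, E z ≤ 2 * (b z.1 z.2 * g z.1) + 2 * (b z.1 z.2 * g z.2) := by
    intro z
    have h1 := habs_sub z.1 z.2
    have h2 : ‖f z.1 - o z.1 z.2 * f z.2‖ ^ 2
        ≤ 2 * g z.1 + 2 * g z.2 := by
      simp only [hg]
      nlinarith [norm_nonneg (f z.1 - o z.1 z.2 * f z.2), norm_nonneg (f z.1),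
        norm_nonneg (f z.2), sq_nonneg (‖f z.1‖ - ‖f z.2‖)]
    have := mul_le_mul_of_nonneg_left h2 (hb z.1 z.2)
    simp only [hE]; nlinarith
  have hsumE : Summable E :=
    Summable.of_nonneg_of_le hEnonneg hEle ((hsumB1.mul_left 2).add (hsumB2.mul_left 2))
  -- summability of F1 and F0
  have hexpB : ∀ x : X, Real.exp (-ψ x) ≤ Real.exp B ∧ Real.exp (ψ x) ≤ Real.exp B := by
    intro x
    have h := hB x
    have h1 := abs_le.mp h
    exact ⟨Real.exp_le_exp.mpr (by linarith), Real.exp_le_exp.mpr (by linarith)⟩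
  have habsu : ∀ x y : X, ‖u x - o x y * u y‖
      ≤ Real.exp B * (‖f x‖ + ‖f y‖) := by
    intro x y
    calc ‖u x - o x y * u y‖
        ≤ ‖u x‖ + ‖o x y * u y‖ := by
          exact norm_sub_le _ _
      _ = Real.exp (-ψ x) * ‖f x‖ + Real.exp (-ψ y) * ‖f y‖ := by
          simp only [hu, norm_mul, ho, one_mul, Complex.norm_real, Real.norm_eq_abs, Real.abs_exp]
      _ ≤ Real.exp B * (‖f x‖ + ‖f y‖) := by
          have h1 := (hexpB x).1; have h2 := (hexpB y).1
          nlinarith [norm_nonneg (f x), norm_nonneg (f y),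
            Real.exp_pos (-ψ x), Real.exp_pos (-ψ y)]
  have habsv : ∀ x y : X, ‖v x - o x y * v y‖
      ≤ Real.exp B * (‖f x‖ + ‖f y‖) := by
    intro x y
    calc ‖v x - o x y * v y‖
        ≤ ‖v x‖ + ‖o x y * v y‖ := by
          exact norm_sub_le _ _
      _ = Real.exp (ψ x) * ‖f x‖ + Real.exp (ψ y) * ‖f y‖ := by
          simp only [hv, norm_mul, ho, one_mul, Complex.norm_real, Real.norm_eq_abs, Real.abs_exp]
      _ ≤ Real.exp B * (‖f x‖ + ‖f y‖) := by
          have h1 := (hexpB x).2; have h2 := (hexpB y).2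
          nlinarith [norm_nonneg (f x), norm_nonneg (f y),
            Real.exp_pos (ψ x), Real.exp_pos (ψ y)]
  have hsq2 : ∀ x y : X, (‖f x‖ + ‖f y‖) ^ 2 ≤ 2 * g x + 2 * g y := by
    intro x y
    simp only [hg]
    nlinarith [sq_nonneg (‖f x‖ - ‖f y‖)]
  have habsF1 : ∀ z : X × X, ‖F1 z‖
      ≤ (2 * Real.exp (2 * B)) * (b z.1 z.2 * g z.1 + b z.1 z.2 * g z.2) := by
    intro z
    simp only [hF1]
    rw [norm_mul, norm_mul, Complex.norm_conj, Complex.norm_real, Real.norm_eq_abs, abs_of_nonneg (hb z.1 z.2)]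
    have h1 := habsu z.1 z.2
    have h2 := habsv z.1 z.2
    have hmm : ‖u z.1 - o z.1 z.2 * u z.2‖ * ‖v z.1 - o z.1 z.2 * v z.2‖
        ≤ (Real.exp B * (‖f z.1‖ + ‖f z.2‖)) ^ 2 := by
      rw [sq]
      exact mul_le_mul h1 h2 (norm_nonneg _) (by positivity)
    have he2B : Real.exp (2 * B) = Real.exp B * Real.exp B := by
      rw [show (2:ℝ) * B = B + B by ring, Real.exp_add]
    have h3 := hsq2 z.1 z.2
    have hbz := hb z.1 z.2
    nlinarith [norm_nonneg (u z.1 - o z.1 z.2 * u z.2),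
      norm_nonneg (v z.1 - o z.1 z.2 * v z.2), Real.exp_pos B, sq_nonneg (Real.exp B),
      mul_le_mul_of_nonneg_left (hmm.trans (by nlinarith [Real.exp_pos B] :
        (Real.exp B * (‖f z.1‖ + ‖f z.2‖)) ^ 2
          ≤ Real.exp (2 * B) * (2 * g z.1 + 2 * g z.2))) hbz]
  have habsF0 : ∀ z : X × X, ‖F0 z‖
      ≤ 2 * (b z.1 z.2 * g z.1 + b z.1 z.2 * g z.2) := by
    intro z
    simp only [hF0]
    rw [norm_mul, norm_mul, Complex.norm_conj, Complex.norm_real, Real.norm_eq_abs, abs_of_nonneg (hb z.1 z.2)]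
    have h1 := habs_sub z.1 z.2
    have h3 := hsq2 z.1 z.2
    have hbz := hb z.1 z.2
    nlinarith [norm_nonneg (f z.1 - o z.1 z.2 * f z.2),
      mul_le_mul_of_nonneg_left (((mul_self_le_mul_self (norm_nonneg _) h1).trans_eq
        (by ring)).trans (by nlinarith : (‖f z.1‖ + ‖f z.2‖) ^ 2
          ≤ 2 * g z.1 + 2 * g z.2) : ‖f z.1 - o z.1 z.2 * f z.2‖
            * ‖f z.1 - o z.1 z.2 * f z.2‖ ≤ 2 * g z.1 + 2 * g z.2) hbz]
  have hsumF1 : Summable F1 := by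
    apply Summable.of_norm_bounded (((hsumB1.add hsumB2)).mul_left (2 * Real.exp (2 * B)))
    intro z
    exact (habsF1 z).trans_eq (by ring)
  have hsumF0 : Summable F0 := by
    apply Summable.of_norm_bounded (((hsumB1.add hsumB2)).mul_left 2)
    intro z
    exact (habsF0 z).trans_eq (by ring)
  -- difference of forms
  have hcpart : (∑' x, (c x : ℂ) * (u x * (starRingEnd ℂ) (v x)))
      = ∑' x, (c x : ℂ) * (f x * (starRingEnd ℂ) (f x)) := by
    refine tsum_congr fun x => ?_
    have hexp : ((Real.exp (-ψ x) : ℝ) : ℂ) * ((Real.exp (ψ x) : ℝ) : ℂ) = 1 := by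
      rw [← Complex.ofReal_mul, ← Real.exp_add]; simp
    simp only [hu, hv, map_mul, Complex.conj_ofReal]
    linear_combination (c x : ℂ) * (f x * (starRingEnd ℂ) (f x)) * hexp
  have hdiff : qForm b o c u v - qForm b o c f f = (1 / 2 : ℂ) * ∑' z, (F1 z - F0 z) := by
    have hq1 : qForm b o c u v = (1 / 2 : ℂ) * ∑' z, F1 z
        + ∑' x, (c x : ℂ) * (u x * (starRingEnd ℂ) (v x)) := rfl
    have hq2 : qForm b o c f f = (1 / 2 : ℂ) * ∑' z, F0 z
        + ∑' x, (c x : ℂ) * (f x * (starRingEnd ℂ) (f x)) := rfl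
    rw [hq1, hq2, hcpart, Summable.tsum_sub hsumF1 hsumF0]
    ring
  -- pointwise estimate
  set c1 : ℝ := Real.exp (3 * s) * ε ^ 2 / 2 with hc1
  set c3 : ℝ := 2 * Real.exp (2 * s) / δ * ε ^ 2 with hc3
  set G : X × X → ℝ := fun z => c1 * (b z.1 z.2 * d z.1 z.2 ^ 2 * g z.1)
      + (c1 + c3) * (b z.1 z.2 * d z.1 z.2 ^ 2 * g z.2) + (δ / 2) * E z with hG
  have hsumG : Summable G :=
    ((hsumA.mul_left c1).add (hsumA'.mul_left (c1 + c3))).add (hsumE.mul_left (δ / 2))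
  have hptwise : ∀ z : X × X, ‖F1 z - F0 z‖ ≤ G z := by
    rintro ⟨x, y⟩
    by_cases hbz : b x y = 0
    · simp [hF1, hF0, hG, hE, hbz]
    · have hbpos : 0 < b x y := (hb x y).lt_of_ne (Ne.symm hbz)
      have hds : d x y ≤ s := hjump x y hbpos
      have hlip := hψlip x y
      have hts : |ψ x - ψ y| ≤ s := by nlinarith [hdnonneg x y]
      have ht2 : (ψ x - ψ y) ^ 2 ≤ ε ^ 2 * d x y ^ 2 := by
        nlinarith [mul_self_le_mul_self (abs_nonneg (ψ x - ψ y)) hlip,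
          sq_abs (ψ x - ψ y)]
      have h1 : ((Real.exp (-ψ x) : ℝ) : ℂ)
          = ((Real.exp (-(ψ x - ψ y)) : ℝ) : ℂ) * ((Real.exp (-ψ y) : ℝ) : ℂ) := by
        rw [← Complex.ofReal_mul, ← Real.exp_add, show -(ψ x - ψ y) + -ψ y = -ψ x by ring]
      have h2 : ((Real.exp (ψ x) : ℝ) : ℂ)
          = ((Real.exp (ψ x - ψ y) : ℝ) : ℂ) * ((Real.exp (ψ y) : ℝ) : ℂ) := by
        rw [← Complex.ofReal_mul, ← Real.exp_add, show (ψ x - ψ y) + ψ y = ψ x by ring]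
      have h3 : ((Real.exp (-ψ y) : ℝ) : ℂ) * ((Real.exp (ψ y) : ℝ) : ℂ) = 1 := by
        rw [← Complex.ofReal_mul, ← Real.exp_add]; simp
      have hfac : (u x - o x y * u y) * (starRingEnd ℂ) (v x - o x y * v y)
          = (((Real.exp (-(ψ x - ψ y)) : ℝ) : ℂ) * f x - o x y * f y)
            * (starRingEnd ℂ) (((Real.exp (ψ x - ψ y) : ℝ) : ℂ) * f x - o x y * f y) := by
        simp only [hu, hv]
        rw [h1, h2]
        simp only [map_sub, map_mul, Complex.conj_ofReal]
        linear_combination ((((Real.exp (-(ψ x - ψ y)) : ℝ) : ℂ) * f x - o x y * f y)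
          * (((Real.exp (ψ x - ψ y) : ℝ) : ℂ) * (starRingEnd ℂ) (f x)
            - (starRingEnd ℂ) (o x y) * (starRingEnd ℂ) (f y))) * h3
      have hsplit : F1 (x, y) - F0 (x, y) = ((b x y : ℝ) : ℂ) *
          ((((Real.exp (-(ψ x - ψ y)) : ℝ) : ℂ) * f x - o x y * f y)
            * (starRingEnd ℂ) (((Real.exp (ψ x - ψ y) : ℝ) : ℂ) * f x - o x y * f y)
           - (f x - o x y * f y) * (starRingEnd ℂ) (f x - o x y * f y)) := by
        simp only [hF1, hF0]
        rw [hfac]; ring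
      rw [hsplit, norm_mul, Complex.norm_real, Real.norm_eq_abs, abs_of_nonneg (hb x y)]
      have hkey := st12_key_ineq s δ (ψ x - ψ y) hδ hts (f x) (o x y * f y)
      have habsβ : ‖o x y * f y‖ = ‖f y‖ := by
        rw [norm_mul, ho, one_mul]
      rw [habsβ] at hkey
      have hA1 : b x y * (Real.exp (3 * s) * (ψ x - ψ y) ^ 2
            * (‖f x‖ ^ 2 + ‖f y‖ ^ 2) / 2)
          ≤ c1 * (b x y * d x y ^ 2 * ‖f x‖ ^ 2)
            + c1 * (b x y * d x y ^ 2 * ‖f y‖ ^ 2) := by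
        calc b x y * (Real.exp (3 * s) * (ψ x - ψ y) ^ 2
              * (‖f x‖ ^ 2 + ‖f y‖ ^ 2) / 2)
            = (b x y * (Real.exp (3 * s)
              * (‖f x‖ ^ 2 + ‖f y‖ ^ 2) / 2)) * (ψ x - ψ y) ^ 2 := by
              ring
          _ ≤ (b x y * (Real.exp (3 * s)
              * (‖f x‖ ^ 2 + ‖f y‖ ^ 2) / 2)) * (ε ^ 2 * d x y ^ 2) := by
              apply mul_le_mul_of_nonneg_left ht2
              have := hb x y
              positivity
          _ = c1 * (b x y * d x y ^ 2 * ‖f x‖ ^ 2)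
              + c1 * (b x y * d x y ^ 2 * ‖f y‖ ^ 2) := by
              rw [hc1]; ring
      have hA3 : b x y * (2 * Real.exp (2 * s) / δ * (ψ x - ψ y) ^ 2 * ‖f y‖ ^ 2)
          ≤ c3 * (b x y * d x y ^ 2 * ‖f y‖ ^ 2) := by
        have hcc : 0 ≤ 2 * Real.exp (2 * s) / δ := le_of_lt (div_pos (by positivity) hδ)
        calc b x y * (2 * Real.exp (2 * s) / δ * (ψ x - ψ y) ^ 2 * ‖f y‖ ^ 2)
            = (b x y * (2 * Real.exp (2 * s) / δ * ‖f y‖ ^ 2))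
              * (ψ x - ψ y) ^ 2 := by ring
          _ ≤ (b x y * (2 * Real.exp (2 * s) / δ * ‖f y‖ ^ 2))
              * (ε ^ 2 * d x y ^ 2) := by
              apply mul_le_mul_of_nonneg_left ht2
              exact mul_nonneg (hb x y) (mul_nonneg hcc (sq_nonneg _))
          _ = c3 * (b x y * d x y ^ 2 * ‖f y‖ ^ 2) := by rw [hc3]; ring
      calc b x y * ‖(((Real.exp (-(ψ x - ψ y)) : ℝ) : ℂ) * f x - o x y * f y)
            * (starRingEnd ℂ) (((Real.exp (ψ x - ψ y) : ℝ) : ℂ) * f x - o x y * f y)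
           - (f x - o x y * f y) * (starRingEnd ℂ) (f x - o x y * f y)‖
          ≤ b x y * (Real.exp (3 * s) * (ψ x - ψ y) ^ 2
              * (‖f x‖ ^ 2 + ‖f y‖ ^ 2) / 2
            + δ / 2 * ‖f x - o x y * f y‖ ^ 2
            + 2 * Real.exp (2 * s) / δ * (ψ x - ψ y) ^ 2 * ‖f y‖ ^ 2) :=
            mul_le_mul_of_nonneg_left hkey (hb x y)
        _ ≤ G (x, y) := by
            simp only [hG, hE, hg]
            ring_nf
            ring_nf at hA1 hA3
            linarith [hA1, hA3]
  -- assembling the estimate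
  have habs_half : ‖qForm b o c u v - qForm b o c f f‖
      = (1 / 2) * ‖∑' z, (F1 z - F0 z)‖ := by
    rw [hdiff, norm_mul, norm_div, norm_one, Complex.norm_two]
  have hsumabs : Summable (fun z => ‖F1 z - F0 z‖) :=
    Summable.of_nonneg_of_le (fun z => norm_nonneg _) hptwise hsumG
  have htsumabs : ‖∑' z, (F1 z - F0 z)‖ ≤ ∑' z, ‖F1 z - F0 z‖ := by
    refine norm_tsum_le_tsum_norm ?_
    exact hsumabs
  have htsumG : (∑' z, ‖F1 z - F0 z‖) ≤ ∑' z, G z :=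
    Summable.tsum_le_tsum hptwise hsumabs hsumG
  have hGsplit : ∑' z, G z = c1 * (∑' z : X × X, b z.1 z.2 * d z.1 z.2 ^ 2 * g z.1)
      + (c1 + c3) * (∑' z : X × X, b z.1 z.2 * d z.1 z.2 ^ 2 * g z.2)
      + (δ / 2) * ∑' z, E z := by
    simp only [hG]
    rw [Summable.tsum_add ((hsumA.mul_left _).add (hsumA'.mul_left _)) (hsumE.mul_left _),
      Summable.tsum_add (hsumA.mul_left _) (hsumA'.mul_left _), tsum_mul_left, tsum_mul_left,
      tsum_mul_left]
  have hAle : (∑' z : X × X, b z.1 z.2 * d z.1 z.2 ^ 2 * g z.1) ≤ ∑' x, m x * g x :=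
    st12_tsum_left_le (fun x y => b x y * d x y ^ 2) hwdnonneg hbd2 g hgnonneg hgfin m hintr
  have hA'le : (∑' z : X × X, b z.1 z.2 * d z.1 z.2 ^ 2 * g z.2) ≤ ∑' x, m x * g x :=
    st12_tsum_right_le (fun x y => b x y * d x y ^ 2) hwdnonneg hbd2 hwdsym g hgnonneg hgfin
      m hintr
  -- the real part of the form
  have hq0 : qForm b o c f f
      = (((1 / 2) * (∑' z, E z) + ∑' x, c x * g x : ℝ) : ℂ) := by
    have hq2 : qForm b o c f f = (1 / 2 : ℂ) * ∑' z, F0 z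
        + ∑' x, (c x : ℂ) * (f x * (starRingEnd ℂ) (f x)) := by
      simp only [qForm, hF0]
    rw [hq2]
    have hF0E : ∀ z : X × X, F0 z = ((E z : ℝ) : ℂ) := by
      intro z
      simp only [hF0, hE]
      rw [Complex.mul_conj, ← Complex.sq_norm]
      push_cast; ring
    have hcE : ∀ x, (c x : ℂ) * (f x * (starRingEnd ℂ) (f x)) = ((c x * g x : ℝ) : ℂ) := by
      intro x
      rw [Complex.mul_conj, ← Complex.sq_norm]
      simp only [hg]
      push_cast; ring
    rw [tsum_congr hF0E, tsum_congr hcE, ← Complex.ofReal_tsum, ← Complex.ofReal_tsum]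
    push_cast; ring
  have hQre : (qForm b o c f f).re = (1 / 2) * (∑' z, E z) + ∑' x, c x * g x := by
    rw [hq0, Complex.ofReal_re]
  have hsumc : Summable (fun x => c x * g x) := by
    apply summable_of_ne_finset_zero (s := hgfin.toFinset)
    intro x hx
    have hx0 : g x = 0 := by
      by_contra h
      exact hx (hgfin.mem_toFinset.mpr h)
    simp [hx0]
  have hsumcneg : Summable (fun x => max (-c x) 0 * g x) := by
    apply summable_of_ne_finset_zero (s := hgfin.toFinset)
    intro x hx
    have hx0 : g x = 0 := by
      by_contra h
      exact hx (hgfin.mem_toFinset.mpr h)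
    simp [hx0]
  have hcle : -(∑' x, c x * g x) ≤ ∑' x, max (-c x) 0 * g x := by
    rw [← tsum_neg]
    apply Summable.tsum_le_tsum _ hsumc.neg hsumcneg
    intro x
    calc -(c x * g x) = (-c x) * g x := by ring
      _ ≤ max (-c x) 0 * g x := mul_le_mul_of_nonneg_right (le_max_left _ _) (hgnonneg x)
  have hEtsum_nonneg : 0 ≤ ∑' z, E z := tsum_nonneg hEnonneg
  have hEle2 : ∑' z, E z
      ≤ 2 * ((qForm b o c f f).re + ∑' x, max (-c x) 0 * g x) := by
    rw [hQre]; linarith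
  have hQpos : 0 ≤ (qForm b o c f f).re + ∑' x, max (-c x) 0 * g x := by
    rw [hQre]; linarith
  have hMnonneg : 0 ≤ ∑' x, m x * g x :=
    tsum_nonneg fun x => mul_nonneg (hm x).le (hgnonneg x)
  have hfinal1 : (1 / 2) * (∑' z, G z)
      ≤ (c1 + c3 / 2) * (∑' x, m x * g x)
        + (δ / 2) * ((qForm b o c f f).re + ∑' x, max (-c x) 0 * g x) := by
    rw [hGsplit]
    have hc1p : 0 ≤ c1 := by rw [hc1]; positivity
    have hc3p : 0 ≤ c3 := le_of_lt (mul_pos (div_pos (by positivity) hδ) (by positivity))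
    linarith [mul_le_mul_of_nonneg_left hAle hc1p,
      mul_le_mul_of_nonneg_left hA'le (by linarith : (0:ℝ) ≤ c1 + c3),
      mul_le_mul_of_nonneg_left hEle2 (by linarith : (0:ℝ) ≤ δ / 2)]
  have hcoef : c1 + c3 / 2 ≤ Real.exp (3 * s) * ε ^ 2 * (1 + 1 / δ) := by
    rw [hc1, hc3]
    have he23 : Real.exp (2 * s) ≤ Real.exp (3 * s) := Real.exp_le_exp.mpr (by linarith)
    have h1δ : (0:ℝ) < 1 / δ := by positivity
    have hrw : 2 * Real.exp (2 * s) / δ * ε ^ 2 / 2 = Real.exp (2 * s) * ε ^ 2 * (1 / δ) := by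
      ring
    rw [hrw]
    have hε2 : (0:ℝ) ≤ ε ^ 2 := sq_nonneg ε
    nlinarith [mul_le_mul_of_nonneg_right he23 hε2, h1δ.le, Real.exp_pos (3 * s)]
  have hMg : (∑' x, m x * ‖f x‖ ^ 2) = ∑' x, m x * g x := by simp only [hg]
  have hcnegg : (∑' x, max (-c x) 0 * ‖f x‖ ^ 2)
      = ∑' x, max (-c x) 0 * g x := by simp only [hg]
  rw [hMg, hcnegg, habs_half]
  have hchain : (1 / 2) * ‖∑' z, (F1 z - F0 z)‖ ≤ (1 / 2) * (∑' z, G z) := by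
    have := htsumabs.trans htsumG
    linarith
  have h1 := mul_le_mul_of_nonneg_right hcoef hMnonneg
  have h2 : (δ / 2) * ((qForm b o c f f).re + ∑' x, max (-c x) 0 * g x)
      ≤ δ * ((qForm b o c f f).re + ∑' x, max (-c x) 0 * g x) := by nlinarith
  linarith
end

section
/- Let V be a countable set, Σ a set of nonempty finite subsets of V, m : Σ → (0,∞) a locally summable weight, θ an incidence function on Σ, and suppose D := sup_{τ∈Σ} (dim(τ)+2)·γ(τ)/m(τ) < ∞, where dim(τ) = |τ| − 1. Then for every p ∈ [1,∞] and every finitely supported ω : Σ → ℂ: ‖∂(δω)‖_p ≤ D·‖ω‖_p, ‖δ(∂ω)‖_p ≤ D·‖ω‖_p, and ‖∂(δω) + δ(∂ω)‖_p ≤ 2D·‖ω‖_p, where ‖η‖_p^p = ∑_{τ∈Σ} m(τ)|η(τ)|^p for p < ∞ and ‖η‖_∞ = sup_τ |η(τ)|. -/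
open Finset


private lemma sum_eq_sum_of_support' {α M : Type*} [AddCommMonoid M] [DecidableEq α]
    (s t : Finset α) (f : α → M) (h : ∀ a, f a ≠ 0 → (a ∈ s ↔ a ∈ t)) :
    ∑ a ∈ s, f a = ∑ a ∈ t, f a := by
  rw [← Finset.sum_subset (Finset.inter_subset_left : s ∩ t ⊆ s) (fun x hx hnx => by
        by_contra hf
        exact hnx (Finset.mem_inter.2 ⟨hx, (h x hf).1 hx⟩)),
      ← Finset.sum_subset (Finset.inter_subset_right : s ∩ t ⊆ t) (fun x hx hnx => by
        by_contra hf
        exact hnx (Finset.mem_inter.2 ⟨(h x hf).2 hx, hx⟩))]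

private lemma count_le' {V : Type*} [DecidableEq V] {S : Set (Finset V)}
    (θ : Finset V → Finset V → ℝ)
    (hθ_val : ∀ τ σ, θ τ σ = 0 ∨ θ τ σ = 1 ∨ θ τ σ = -1)
    (hθ_ne : ∀ τ σ, θ τ σ ≠ 0 ↔ τ ∈ S ∧ σ ∈ S ∧ τ ⊆ σ ∧ (σ \ τ).card = 1)
    (τ : Finset V) (G : Finset (Finset V)) :
    ∑ κ ∈ G, |θ κ τ| ≤ (τ.card : ℝ) := by
  classical
  have h1 : ∑ κ ∈ G, |θ κ τ| = ∑ κ ∈ G.filter (fun κ => θ κ τ ≠ 0), |θ κ τ| := by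
    rw [Finset.sum_filter_of_ne]
    intro x _ hx
    exact fun h0 => hx (by rw [h0, abs_zero])
  have h2 : ∑ κ ∈ G.filter (fun κ => θ κ τ ≠ 0), |θ κ τ| ≤
      ∑ _κ ∈ G.filter (fun κ => θ κ τ ≠ 0), (1 : ℝ) := by
    apply Finset.sum_le_sum
    intro κ _
    rcases hθ_val κ τ with h | h | h <;> rw [h] <;> norm_num
  have hsub : G.filter (fun κ => θ κ τ ≠ 0) ⊆ τ.image (fun v => τ.erase v) := by
    intro κ hκ
    have hκ' := (Finset.mem_filter.1 hκ).2
    obtain ⟨-, -, hsub, hc⟩ := (hθ_ne κ τ).1 hκ'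
    obtain ⟨v, hv⟩ := Finset.card_eq_one.1 hc
    have hvτ : v ∈ τ := (Finset.mem_sdiff.1 (hv ▸ Finset.mem_singleton_self v)).1
    refine Finset.mem_image.2 ⟨v, hvτ, ?_⟩
    rw [Finset.erase_eq, ← hv, Finset.sdiff_sdiff_self_left, Finset.inter_eq_right.2 hsub]
  calc ∑ κ ∈ G, |θ κ τ| ≤ ∑ _κ ∈ G.filter (fun κ => θ κ τ ≠ 0), (1 : ℝ) := h1 ▸ h2
    _ = (G.filter (fun κ => θ κ τ ≠ 0)).card := by simp
    _ ≤ ((τ.image (fun v => τ.erase v)).card : ℝ) := by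
        exact_mod_cast Nat.cast_le.2 (Finset.card_le_card hsub)
    _ ≤ (τ.card : ℝ) := by exact_mod_cast Finset.card_image_le

private lemma schur' {V : Type*} (S : Set (Finset V)) (m : Finset V → ℝ)
    (hm : ∀ σ ∈ S, 0 < m σ)
    (F : Finset (Finset V)) (w : Finset V → ℝ) (hw : ∀ κ, 0 ≤ w κ)
    (K : Finset V → Finset V → ℝ) (hK : ∀ σ κ, 0 ≤ K σ κ)
    (A : Finset V → ℂ) (hA : ∀ σ ∈ S, ‖A σ‖ ≤ ∑ κ ∈ F, K σ κ * w κ)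
    (C : ℝ) (hC : 0 ≤ C)
    (row : ∀ σ ∈ S, ∑ κ ∈ F, K σ κ ≤ C)
    (colS : ∀ κ ∈ F, Summable (fun σ : {σ : Finset V // σ ∈ S} => m σ.1 * K σ.1 κ))
    (col : ∀ κ ∈ F, (∑' σ : {σ : Finset V // σ ∈ S}, m σ.1 * K σ.1 κ) ≤ C * m κ)
    (p : ℝ) (hp : 1 ≤ p) :
    (Summable fun σ : {σ : Finset V // σ ∈ S} => m σ.1 * ‖A σ.1‖ ^ p) ∧
    (∑' σ : {σ : Finset V // σ ∈ S}, m σ.1 * ‖A σ.1‖ ^ p) ≤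
      C ^ p * ∑ κ ∈ F, m κ * w κ ^ p := by
  have hp0 : (0:ℝ) < p := lt_of_lt_of_le one_pos hp
  have hbound : ∀ σ : {σ : Finset V // σ ∈ S}, m σ.1 * ‖A σ.1‖ ^ p ≤
      C ^ (p-1) * ∑ κ ∈ F, (m σ.1 * K σ.1 κ) * w κ ^ p := by
    intro σ
    have hKs : (0:ℝ) ≤ ∑ κ ∈ F, K σ.1 κ :=
      Finset.sum_nonneg fun κ _ => hK _ _
    have hKws : (0:ℝ) ≤ ∑ κ ∈ F, K σ.1 κ * w κ ^ p :=
      Finset.sum_nonneg fun κ _ => mul_nonneg (hK _ _) (Real.rpow_nonneg (hw _) _)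
    have h1 : ‖A σ.1‖ ^ p ≤ (∑ κ ∈ F, K σ.1 κ * w κ) ^ p :=
      Real.rpow_le_rpow (norm_nonneg _) (hA σ.1 σ.2) hp0.le
    have hinner := Real.inner_le_weight_mul_Lp_of_nonneg F hp (fun κ => K σ.1 κ) w
      (fun κ => hK _ _) hw
    have h2 : (∑ κ ∈ F, K σ.1 κ * w κ) ^ p ≤
        (∑ κ ∈ F, K σ.1 κ) ^ (p - 1) * ∑ κ ∈ F, K σ.1 κ * w κ ^ p := by
      have h3 := Real.rpow_le_rpow (Finset.sum_nonneg fun κ _ =>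
        mul_nonneg (hK _ _) (hw _)) hinner hp0.le
      calc (∑ κ ∈ F, K σ.1 κ * w κ) ^ p
          ≤ ((∑ κ ∈ F, K σ.1 κ) ^ (1 - p⁻¹) * (∑ κ ∈ F, K σ.1 κ * w κ ^ p) ^ p⁻¹) ^ p := h3
        _ = ((∑ κ ∈ F, K σ.1 κ) ^ (1 - p⁻¹)) ^ p * ((∑ κ ∈ F, K σ.1 κ * w κ ^ p) ^ p⁻¹) ^ p :=
            Real.mul_rpow (Real.rpow_nonneg hKs _) (Real.rpow_nonneg hKws _)
        _ = (∑ κ ∈ F, K σ.1 κ) ^ ((1 - p⁻¹) * p) * (∑ κ ∈ F, K σ.1 κ * w κ ^ p) ^ (p⁻¹ * p) := by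
            rw [← Real.rpow_mul hKs, ← Real.rpow_mul hKws]
        _ = (∑ κ ∈ F, K σ.1 κ) ^ (p - 1) * ∑ κ ∈ F, K σ.1 κ * w κ ^ p := by
            rw [inv_mul_cancel₀ hp0.ne', Real.rpow_one]
            congr 2
            field_simp
    have h4 : (∑ κ ∈ F, K σ.1 κ) ^ (p - 1) ≤ C ^ (p - 1) :=
      Real.rpow_le_rpow hKs (row σ.1 σ.2) (by linarith)
    calc m σ.1 * ‖A σ.1‖ ^ p
        ≤ m σ.1 * ((∑ κ ∈ F, K σ.1 κ) ^ (p - 1) * ∑ κ ∈ F, K σ.1 κ * w κ ^ p) :=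
          mul_le_mul_of_nonneg_left (h1.trans h2) (hm _ σ.2).le
      _ ≤ m σ.1 * (C ^ (p - 1) * ∑ κ ∈ F, K σ.1 κ * w κ ^ p) :=
          mul_le_mul_of_nonneg_left (mul_le_mul_of_nonneg_right h4 hKws) (hm _ σ.2).le
      _ = C ^ (p-1) * ∑ κ ∈ F, (m σ.1 * K σ.1 κ) * w κ ^ p := by
          simp only [Finset.mul_sum]
          exact Finset.sum_congr rfl fun κ _ => by ring
  have hGsum : Summable (fun σ : {σ : Finset V // σ ∈ S} =>
      C ^ (p-1) * ∑ κ ∈ F, (m σ.1 * K σ.1 κ) * w κ ^ p) :=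
    (summable_sum fun κ hκ => (colS κ hκ).mul_right (w κ ^ p)).mul_left _
  have hg0 : ∀ σ : {σ : Finset V // σ ∈ S}, 0 ≤ m σ.1 * ‖A σ.1‖ ^ p :=
    fun σ => mul_nonneg (hm _ σ.2).le (Real.rpow_nonneg (norm_nonneg _) _)
  have hsummable : Summable (fun σ : {σ : Finset V // σ ∈ S} =>
      m σ.1 * ‖A σ.1‖ ^ p) :=
    Summable.of_nonneg_of_le hg0 hbound hGsum
  refine ⟨hsummable, ?_⟩
  have h5 : (∑' σ : {σ : Finset V // σ ∈ S}, m σ.1 * ‖A σ.1‖ ^ p) ≤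
      ∑' σ : {σ : Finset V // σ ∈ S}, C ^ (p-1) * ∑ κ ∈ F, (m σ.1 * K σ.1 κ) * w κ ^ p :=
    Summable.tsum_le_tsum hbound hsummable hGsum
  have h6 : (∑' σ : {σ : Finset V // σ ∈ S},
      C ^ (p-1) * ∑ κ ∈ F, (m σ.1 * K σ.1 κ) * w κ ^ p) =
      C ^ (p-1) * ∑ κ ∈ F, (∑' σ : {σ : Finset V // σ ∈ S}, m σ.1 * K σ.1 κ) * w κ ^ p := by
    rw [tsum_mul_left]
    congr 1
    rw [Summable.tsum_finsetSum (fun κ hκ => (colS κ hκ).mul_right (w κ ^ p))]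
    exact Finset.sum_congr rfl fun κ hκ => (tsum_mul_right)
  have h7 : ∑ κ ∈ F, (∑' σ : {σ : Finset V // σ ∈ S}, m σ.1 * K σ.1 κ) * w κ ^ p ≤
      ∑ κ ∈ F, (C * m κ) * w κ ^ p :=
    Finset.sum_le_sum fun κ hκ => mul_le_mul_of_nonneg_right (col κ hκ)
      (Real.rpow_nonneg (hw _) _)
  calc (∑' σ : {σ : Finset V // σ ∈ S}, m σ.1 * ‖A σ.1‖ ^ p)
      ≤ C ^ (p-1) * ∑ κ ∈ F, (∑' σ : {σ : Finset V // σ ∈ S}, m σ.1 * K σ.1 κ) * w κ ^ p :=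
        h5.trans_eq h6
    _ ≤ C ^ (p-1) * ∑ κ ∈ F, (C * m κ) * w κ ^ p :=
        mul_le_mul_of_nonneg_left h7 (Real.rpow_nonneg hC _)
    _ = C ^ p * ∑ κ ∈ F, m κ * w κ ^ p := by
        have hCp : C ^ (p - 1) * C ^ (1:ℝ) = C ^ p := by
          rw [← Real.rpow_add' hC (by rw [sub_add_cancel]; exact hp0.ne'), sub_add_cancel]
        rw [Finset.mul_sum, Finset.mul_sum]
        refine Finset.sum_congr rfl fun κ _ => ?_
        rw [← hCp, Real.rpow_one]
        ring

/-- The coboundary operator `δω(σ) = ∑_{τ≺σ} θ(τ,σ)ω(τ)` (the incidence function `θ`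
vanishes on non-incident pairs, so we may sum over the whole powerset). -/
noncomputable def cobdry {V : Type*} [DecidableEq V] (θ : Finset V → Finset V → ℝ)
    (ω : Finset V → ℂ) : Finset V → ℂ :=
  fun σ => ∑ τ ∈ σ.powerset, (θ τ σ : ℂ) * ω τ

/-- The boundary operator `∂ω(ρ) = (1/m(ρ))·∑_{τ≻ρ} m(τ)θ(ρ,τ)ω(τ)`. -/
noncomputable def bdry {V : Type*} (m : Finset V → ℝ) (θ : Finset V → Finset V → ℝ)
    (ω : Finset V → ℂ) : Finset V → ℂ :=
  fun ρ => (((m ρ)⁻¹ : ℝ) : ℂ) * ∑' τ, ((m τ * θ ρ τ : ℝ) : ℂ) * ω τ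

set_option maxHeartbeats 1000000 in
/-- If `D = sup_{τ∈Σ} (dim(τ)+2)·γ(τ)/m(τ) < ∞`, then for every
`p ∈ [1,∞]` and every finitely supported `ω`: `‖∂(δω)‖_p ≤ D‖ω‖_p`, `‖δ(∂ω)‖_p ≤ D‖ω‖_p`
and `‖∂(δω) + δ(∂ω)‖_p ≤ 2D‖ω‖_p`. -/
theorem stmt17 {V : Type*} [Countable V] [DecidableEq V]
    (S : Set (Finset V)) (hS : ∀ σ ∈ S, σ.Nonempty)
    (m : Finset V → ℝ) (hm : ∀ σ ∈ S, 0 < m σ)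
    (θ : Finset V → Finset V → ℝ)
    (hθ_val : ∀ τ σ, θ τ σ = 0 ∨ θ τ σ = 1 ∨ θ τ σ = -1)
    (hθ_ne : ∀ τ σ, θ τ σ ≠ 0 ↔ τ ∈ S ∧ σ ∈ S ∧ τ ⊆ σ ∧ (σ \ τ).card = 1)
    (hloc : ∀ τ ∈ S, Summable fun σ => |θ τ σ| * m σ)
    (D : ℝ) (hD0 : 0 ≤ D)
    (hD : ∀ τ ∈ S, ((τ.card : ℝ) + 1) * (∑' σ, |θ τ σ| * m σ) ≤ D * m τ)
    (ω : Finset V → ℂ) (hω_fin : (Function.support ω).Finite)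
    (hω_supp : ∀ τ, ω τ ≠ 0 → τ ∈ S) :
    (∀ p : ℝ, 1 ≤ p →
      ((Summable fun σ : {σ : Finset V // σ ∈ S} =>
          m σ.1 * ‖bdry m θ (cobdry θ ω) σ.1‖ ^ p) ∧
        (∑' σ : {σ : Finset V // σ ∈ S},
            m σ.1 * ‖bdry m θ (cobdry θ ω) σ.1‖ ^ p) ^ (1 / p) ≤
          D * (∑' τ : {τ : Finset V // τ ∈ S}, m τ.1 * ‖ω τ.1‖ ^ p) ^ (1 / p)) ∧
      ((Summable fun σ : {σ : Finset V // σ ∈ S} =>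
          m σ.1 * ‖cobdry θ (bdry m θ ω) σ.1‖ ^ p) ∧
        (∑' σ : {σ : Finset V // σ ∈ S},
            m σ.1 * ‖cobdry θ (bdry m θ ω) σ.1‖ ^ p) ^ (1 / p) ≤
          D * (∑' τ : {τ : Finset V // τ ∈ S}, m τ.1 * ‖ω τ.1‖ ^ p) ^ (1 / p)) ∧
      ((Summable fun σ : {σ : Finset V // σ ∈ S} =>
          m σ.1 * ‖bdry m θ (cobdry θ ω) σ.1 + cobdry θ (bdry m θ ω) σ.1‖ ^ p) ∧
        (∑' σ : {σ : Finset V // σ ∈ S},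
            m σ.1 * ‖bdry m θ (cobdry θ ω) σ.1 + cobdry θ (bdry m θ ω) σ.1‖ ^ p)
            ^ (1 / p) ≤
          2 * D * (∑' τ : {τ : Finset V // τ ∈ S},
            m τ.1 * ‖ω τ.1‖ ^ p) ^ (1 / p))) ∧
    (∀ σ ∈ S,
      ‖bdry m θ (cobdry θ ω) σ‖ ≤
        D * ⨆ τ : {τ : Finset V // τ ∈ S}, ‖ω τ.1‖) ∧
    (∀ σ ∈ S,
      ‖cobdry θ (bdry m θ ω) σ‖ ≤
        D * ⨆ τ : {τ : Finset V // τ ∈ S}, ‖ω τ.1‖) ∧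
    (∀ σ ∈ S,
      ‖bdry m θ (cobdry θ ω) σ + cobdry θ (bdry m θ ω) σ‖ ≤
        2 * D * ⨆ τ : {τ : Finset V // τ ∈ S}, ‖ω τ.1‖) := by
  classical
  set F : Finset (Finset V) := hω_fin.toFinset with hFdef
  have hmemF : ∀ κ, κ ∈ F ↔ ω κ ≠ 0 := fun κ => hω_fin.mem_toFinset
  have hFS : ∀ κ ∈ F, κ ∈ S := fun κ hκ => hω_supp κ ((hmemF κ).1 hκ)
  have hωF : ∀ κ, κ ∉ F → ω κ = 0 := fun κ hκ => by
    by_contra h; exact hκ ((hmemF κ).2 h)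
  set w : Finset V → ℝ := fun κ => ‖ω κ‖ with hwdef
  have hw : ∀ κ, 0 ≤ w κ := fun κ => norm_nonneg _
  have hθ1 : ∀ ρ σ, |θ ρ σ| ≤ 1 := by
    intro ρ σ; rcases hθ_val ρ σ with h | h | h <;> rw [h] <;> norm_num
  have hθS : ∀ ρ σ, θ ρ σ ≠ 0 → ρ ∈ S ∧ σ ∈ S ∧ ρ ⊆ σ ∧ (σ \ ρ).card = 1 :=
    fun ρ σ h => (hθ_ne ρ σ).1 h
  have hθzero : ∀ ρ σ, ρ ∉ S → θ ρ σ = 0 := fun ρ σ h => by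
    by_contra hne; exact h (hθS ρ σ hne).1
  have hcard : ∀ ρ σ, θ ρ σ ≠ 0 → σ.card = ρ.card + 1 := by
    intro ρ σ h
    obtain ⟨-, -, hsub, hc⟩ := hθS ρ σ h
    rw [← Finset.card_sdiff_add_card_eq_card hsub, hc, add_comm]
  set γ : Finset V → ℝ := fun ρ => ∑' τ, |θ ρ τ| * m τ with hγdef
  have hterm0 : ∀ ρ τ, 0 ≤ |θ ρ τ| * m τ := by
    intro ρ τ
    by_cases h : θ ρ τ = 0
    · simp [h]
    · exact mul_nonneg (abs_nonneg _) (hm τ (hθS ρ τ h).2.1).le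
  have hγle : ∀ ρ ∈ S, (m ρ)⁻¹ * γ ρ ≤ D / ((ρ.card : ℝ) + 1) := by
    intro ρ hρ
    have hc : (0:ℝ) < (ρ.card : ℝ) + 1 := by positivity
    have hmρ := hm ρ hρ
    rw [inv_mul_eq_div, div_le_div_iff₀ hmρ hc]
    calc γ ρ * ((ρ.card : ℝ) + 1) = ((ρ.card : ℝ) + 1) * γ ρ := mul_comm _ _
      _ ≤ D * m ρ := hD ρ hρ
  -- kernel T and K (for ∂δ)
  set T : Finset V → Finset V → ℝ := fun σ κ => ∑' τ, |θ σ τ| * |θ κ τ| * m τ with hTdef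
  have hT0 : ∀ σ κ τ, 0 ≤ |θ σ τ| * |θ κ τ| * m τ := by
    intro σ κ τ
    by_cases h : θ σ τ = 0
    · simp [h]
    · exact mul_nonneg (mul_nonneg (abs_nonneg _) (abs_nonneg _)) (hm τ (hθS _ _ h).2.1).le
  have hTle : ∀ σ κ τ, |θ σ τ| * |θ κ τ| * m τ ≤ |θ σ τ| * m τ := by
    intro σ κ τ
    by_cases h : θ σ τ = 0
    · simp [h]
    · have hmτ := hm τ (hθS _ _ h).2.1
      exact mul_le_mul_of_nonneg_right
        (mul_le_of_le_one_right (abs_nonneg _) (hθ1 κ τ)) hmτ.le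
  have hTsummable : ∀ σ κ, Summable (fun τ => |θ σ τ| * |θ κ τ| * m τ) := by
    intro σ κ
    by_cases hσ : σ ∈ S
    · exact Summable.of_nonneg_of_le (hT0 σ κ) (hTle σ κ) (hloc σ hσ)
    · exact summable_zero.congr fun τ => by simp [hθzero σ τ hσ]
  have hTnonneg : ∀ σ κ, 0 ≤ T σ κ := fun σ κ => tsum_nonneg (hT0 σ κ)
  set K : Finset V → Finset V → ℝ := fun σ κ => (m σ)⁻¹ * T σ κ with hKdef
  have hTzero : ∀ σ κ, σ ∉ S → T σ κ = 0 := by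
    intro σ κ hσ
    rw [hTdef]
    simp only
    rw [show (fun τ => |θ σ τ| * |θ κ τ| * m τ) = fun τ => (0:ℝ) from
      funext fun τ => by simp [hθzero σ τ hσ], tsum_zero]
  have hK : ∀ σ κ, 0 ≤ K σ κ := by
    intro σ κ
    by_cases hσ : σ ∈ S
    · exact mul_nonneg (inv_nonneg.2 (hm σ hσ).le) (hTnonneg σ κ)
    · rw [hKdef]; simp only; rw [hTzero σ κ hσ, mul_zero]
  -- pointwise bound for ∂δω
  have hcob : ∀ τ, cobdry θ ω τ = ∑ κ ∈ F, (θ κ τ : ℂ) * ω κ := by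
    intro τ
    apply sum_eq_sum_of_support'
    intro κ hne
    have hθne : θ κ τ ≠ 0 := by
      intro h; apply hne; rw [h]; simp
    have hωne : ω κ ≠ 0 := by
      intro h; apply hne; rw [h]; simp
    exact ⟨fun _ => (hmemF κ).2 hωne, fun _ => Finset.mem_powerset.2 (hθS κ τ hθne).2.2.1⟩
  have hnormeq : ∀ σ κ τ, ‖((m τ * θ σ τ : ℝ) : ℂ) * ((θ κ τ : ℂ) * ω κ)‖ =
      (|θ σ τ| * |θ κ τ| * m τ) * w κ := by
    intro σ κ τ
    by_cases h : θ σ τ = 0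
    · simp [h]
    · have hmτ := hm τ (hθS σ τ h).2.1
      rw [norm_mul, norm_mul, Complex.norm_real, Complex.norm_real,
        Real.norm_eq_abs, Real.norm_eq_abs, abs_mul, abs_of_pos hmτ]
      show m τ * |θ σ τ| * (|θ κ τ| * w κ) = |θ σ τ| * |θ κ τ| * m τ * w κ
      ring
  have hCsummand : ∀ σ κ, Summable (fun τ => ((m τ * θ σ τ : ℝ) : ℂ) * ((θ κ τ : ℂ) * ω κ)) := by
    intro σ κ
    apply Summable.of_norm
    apply Summable.congr ((hTsummable σ κ).mul_right (w κ))
    exact fun τ => (hnormeq σ κ τ).symm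
  have hAbound : ∀ σ ∈ S, ‖bdry m θ (cobdry θ ω) σ‖ ≤ ∑ κ ∈ F, K σ κ * w κ := by
    intro σ hσ
    have e1 : bdry m θ (cobdry θ ω) σ =
        (((m σ)⁻¹ : ℝ) : ℂ) * ∑ κ ∈ F, ∑' τ, ((m τ * θ σ τ : ℝ) : ℂ) * ((θ κ τ : ℂ) * ω κ) := by
      rw [bdry]
      congr 1
      rw [← Summable.tsum_finsetSum (fun κ _ => hCsummand σ κ)]
      apply tsum_congr
      intro τ
      rw [hcob τ, Finset.mul_sum]
    rw [e1, norm_mul, Complex.norm_real, Real.norm_eq_abs, abs_of_nonneg (inv_nonneg.2 (hm σ hσ).le)]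
    have e2 : ‖∑ κ ∈ F, ∑' τ, ((m τ * θ σ τ : ℝ) : ℂ) * ((θ κ τ : ℂ) * ω κ)‖ ≤
        ∑ κ ∈ F, T σ κ * w κ := by
      refine (norm_sum_le _ _).trans (Finset.sum_le_sum fun κ _ => ?_)
      refine (norm_tsum_le_tsum_norm ?_).trans_eq ?_
      · exact Summable.congr ((hTsummable σ κ).mul_right (w κ)) fun τ => (hnormeq σ κ τ).symm
      · rw [tsum_congr (fun τ => hnormeq σ κ τ), tsum_mul_right]
    calc (m σ)⁻¹ * ‖∑ κ ∈ F, ∑' τ, ((m τ * θ σ τ : ℝ) : ℂ) * ((θ κ τ : ℂ) * ω κ)‖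
        ≤ (m σ)⁻¹ * ∑ κ ∈ F, T σ κ * w κ :=
          mul_le_mul_of_nonneg_left e2 (inv_nonneg.2 (hm σ hσ).le)
      _ = ∑ κ ∈ F, K σ κ * w κ := by
          rw [Finset.mul_sum]
          exact Finset.sum_congr rfl fun κ _ => by rw [hKdef]; ring
  -- row bound for K
  have hKrow : ∀ σ ∈ S, ∑ κ ∈ F, K σ κ ≤ D := by
    intro σ hσ
    have h1 : ∑ κ ∈ F, T σ κ ≤ ((σ.card : ℝ) + 1) * γ σ := by
      have e : ∑ κ ∈ F, T σ κ = ∑' τ, ∑ κ ∈ F, |θ σ τ| * |θ κ τ| * m τ :=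
        (Summable.tsum_finsetSum fun κ _ => hTsummable σ κ).symm
      rw [e]
      have hle : ∀ τ, ∑ κ ∈ F, |θ σ τ| * |θ κ τ| * m τ ≤ ((σ.card : ℝ) + 1) * (|θ σ τ| * m τ) := by
        intro τ
        by_cases h : θ σ τ = 0
        · simp [h]
        · have hmτ := hm τ (hθS σ τ h).2.1
          have hcc : (τ.card : ℝ) = (σ.card : ℝ) + 1 := by exact_mod_cast hcard σ τ h
          calc ∑ κ ∈ F, |θ σ τ| * |θ κ τ| * m τ
              = (∑ κ ∈ F, |θ κ τ|) * (|θ σ τ| * m τ) := by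
                rw [Finset.sum_mul]; exact Finset.sum_congr rfl fun κ _ => by ring
            _ ≤ ((σ.card : ℝ) + 1) * (|θ σ τ| * m τ) :=
                mul_le_mul_of_nonneg_right
                  (by rw [← hcc]; exact count_le' θ hθ_val hθ_ne τ F)
                  (mul_nonneg (abs_nonneg _) hmτ.le)
      calc ∑' τ, ∑ κ ∈ F, |θ σ τ| * |θ κ τ| * m τ
          ≤ ∑' τ, ((σ.card : ℝ) + 1) * (|θ σ τ| * m τ) :=
            Summable.tsum_le_tsum hle (summable_sum fun κ _ => hTsummable σ κ) ((hloc σ hσ).mul_left _)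
        _ = ((σ.card : ℝ) + 1) * γ σ := tsum_mul_left
    have e3 : ∑ κ ∈ F, K σ κ = (m σ)⁻¹ * ∑ κ ∈ F, T σ κ := by
      rw [Finset.mul_sum]
    rw [e3]
    calc (m σ)⁻¹ * ∑ κ ∈ F, T σ κ ≤ (m σ)⁻¹ * (((σ.card : ℝ) + 1) * γ σ) :=
          mul_le_mul_of_nonneg_left h1 (inv_nonneg.2 (hm σ hσ).le)
      _ ≤ (m σ)⁻¹ * (D * m σ) := mul_le_mul_of_nonneg_left (hD σ hσ) (inv_nonneg.2 (hm σ hσ).le)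
      _ = D := by rw [mul_comm D (m σ), ← mul_assoc, inv_mul_cancel₀ (hm σ hσ).ne', one_mul]
  -- column bound for K
  have hKid : ∀ κ, ∀ σ : {σ : Finset V // σ ∈ S}, m σ.1 * K σ.1 κ = T σ.1 κ := by
    intro κ σ
    rw [hKdef]
    show m σ.1 * ((m σ.1)⁻¹ * T σ.1 κ) = T σ.1 κ
    rw [← mul_assoc, mul_inv_cancel₀ (hm _ σ.2).ne', one_mul]
  have hKcol_sum : ∀ κ ∈ F, ∀ u : Finset {σ : Finset V // σ ∈ S},
      ∑ σ ∈ u, m σ.1 * K σ.1 κ ≤ D * m κ := by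
    intro κ hκ u
    have hκS := hFS κ hκ
    have e : ∑ σ ∈ u, m σ.1 * K σ.1 κ = ∑' τ, ∑ σ ∈ u, |θ σ.1 τ| * |θ κ τ| * m τ := by
      rw [Finset.sum_congr rfl (fun σ _ => hKid κ σ)]
      exact (Summable.tsum_finsetSum fun σ _ => hTsummable σ.1 κ).symm
    rw [e]
    have hle : ∀ τ, ∑ σ ∈ u, |θ σ.1 τ| * |θ κ τ| * m τ ≤ ((κ.card : ℝ) + 1) * (|θ κ τ| * m τ) := by
      intro τ
      by_cases h : θ κ τ = 0
      · simp [h]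
      · have hmτ := hm τ (hθS κ τ h).2.1
        have hcc : (τ.card : ℝ) = (κ.card : ℝ) + 1 := by exact_mod_cast hcard κ τ h
        have himg : ∑ σ ∈ u, |θ σ.1 τ| = ∑ σ' ∈ u.image Subtype.val, |θ σ' τ| := by
          rw [Finset.sum_image (fun x _ y _ hxy => Subtype.ext hxy)]
        calc ∑ σ ∈ u, |θ σ.1 τ| * |θ κ τ| * m τ
            = (∑ σ ∈ u, |θ σ.1 τ|) * (|θ κ τ| * m τ) := by
              rw [Finset.sum_mul]; exact Finset.sum_congr rfl fun σ _ => by ring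
          _ ≤ ((κ.card : ℝ) + 1) * (|θ κ τ| * m τ) := by
              refine mul_le_mul_of_nonneg_right ?_ (mul_nonneg (abs_nonneg _) hmτ.le)
              rw [himg, ← hcc]
              exact count_le' θ hθ_val hθ_ne τ _
    calc ∑' τ, ∑ σ ∈ u, |θ σ.1 τ| * |θ κ τ| * m τ
        ≤ ∑' τ, ((κ.card : ℝ) + 1) * (|θ κ τ| * m τ) :=
          Summable.tsum_le_tsum hle (summable_sum fun σ _ => hTsummable σ.1 κ) ((hloc κ hκS).mul_left _)
      _ = ((κ.card : ℝ) + 1) * γ κ := tsum_mul_left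
      _ ≤ D * m κ := hD κ hκS
  have hKcolS : ∀ κ ∈ F, Summable (fun σ : {σ : Finset V // σ ∈ S} => m σ.1 * K σ.1 κ) := by
    intro κ hκ
    exact summable_of_sum_le (fun σ => by rw [hKid κ σ]; exact hTnonneg _ _) (hKcol_sum κ hκ)
  have hKcol : ∀ κ ∈ F, (∑' σ : {σ : Finset V // σ ∈ S}, m σ.1 * K σ.1 κ) ≤ D * m κ :=
    fun κ hκ => Summable.tsum_le_of_sum_le (hKcolS κ hκ) (hKcol_sum κ hκ)
  -- kernel L (for δ∂)
  set L : Finset V → Finset V → ℝ :=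
    fun σ κ => ∑ ρ ∈ σ.powerset, |θ ρ σ| * ((m ρ)⁻¹ * (|θ ρ κ| * m κ)) with hLdef
  have hLterm0 : ∀ σ κ ρ, 0 ≤ |θ ρ σ| * ((m ρ)⁻¹ * (|θ ρ κ| * m κ)) := by
    intro σ κ ρ
    by_cases h1 : θ ρ σ = 0
    · simp [h1]
    by_cases h2 : θ ρ κ = 0
    · simp [h2]
    have hρ := hm ρ (hθS ρ σ h1).1
    have hκ := hm κ (hθS ρ κ h2).2.1
    positivity
  have hL0 : ∀ σ κ, 0 ≤ L σ κ := fun σ κ => Finset.sum_nonneg fun ρ _ => hLterm0 σ κ ρ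
  -- pointwise bound for δ∂ω
  have hbd : ∀ ρ, bdry m θ ω ρ =
      (((m ρ)⁻¹ : ℝ) : ℂ) * ∑ κ ∈ F, ((m κ * θ ρ κ : ℝ) : ℂ) * ω κ := by
    intro ρ
    rw [bdry]
    congr 1
    exact tsum_eq_sum fun κ hκ => by rw [hωF κ hκ, mul_zero]
  have hBrepr : ∀ σ, cobdry θ (bdry m θ ω) σ = ∑ κ ∈ F,
      (∑ ρ ∈ σ.powerset, ((θ ρ σ : ℝ) : ℂ) * ((((m ρ)⁻¹ : ℝ) : ℂ) * ((m κ * θ ρ κ : ℝ) : ℂ))) *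
        ω κ := by
    intro σ
    rw [cobdry]
    calc ∑ ρ ∈ σ.powerset, ((θ ρ σ : ℝ) : ℂ) * bdry m θ ω ρ
        = ∑ ρ ∈ σ.powerset, ∑ κ ∈ F,
            ((θ ρ σ : ℝ) : ℂ) * ((((m ρ)⁻¹ : ℝ) : ℂ) * (((m κ * θ ρ κ : ℝ) : ℂ) * ω κ)) := by
          refine Finset.sum_congr rfl fun ρ _ => ?_
          rw [hbd ρ]
          simp only [Finset.mul_sum]
      _ = ∑ κ ∈ F, ∑ ρ ∈ σ.powerset,
            ((θ ρ σ : ℝ) : ℂ) * ((((m ρ)⁻¹ : ℝ) : ℂ) * (((m κ * θ ρ κ : ℝ) : ℂ) * ω κ)) :=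
          Finset.sum_comm
      _ = ∑ κ ∈ F, (∑ ρ ∈ σ.powerset,
            ((θ ρ σ : ℝ) : ℂ) * ((((m ρ)⁻¹ : ℝ) : ℂ) * ((m κ * θ ρ κ : ℝ) : ℂ))) * ω κ := by
          refine Finset.sum_congr rfl fun κ _ => ?_
          rw [Finset.sum_mul]
          exact Finset.sum_congr rfl fun ρ _ => by ring
  have hcoefeq : ∀ σ κ ρ, ‖((θ ρ σ : ℝ) : ℂ) *
      ((((m ρ)⁻¹ : ℝ) : ℂ) * ((m κ * θ ρ κ : ℝ) : ℂ))‖ =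
      |θ ρ σ| * ((m ρ)⁻¹ * (|θ ρ κ| * m κ)) := by
    intro σ κ ρ
    by_cases h1 : θ ρ σ = 0
    · simp [h1]
    by_cases h2 : θ ρ κ = 0
    · simp [h2]
    have hρ := hm ρ (hθS ρ σ h1).1
    have hκ := hm κ (hθS ρ κ h2).2.1
    rw [norm_mul, norm_mul, Complex.norm_real, Complex.norm_real, Complex.norm_real,
      Real.norm_eq_abs, Real.norm_eq_abs, Real.norm_eq_abs,
      abs_of_nonneg (inv_nonneg.2 hρ.le), abs_mul, abs_of_pos hκ]
    ring
  have hBbound : ∀ σ ∈ S, ‖cobdry θ (bdry m θ ω) σ‖ ≤ ∑ κ ∈ F, L σ κ * w κ := by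
    intro σ _
    rw [hBrepr σ]
    refine (norm_sum_le _ _).trans (Finset.sum_le_sum fun κ _ => ?_)
    rw [norm_mul]
    refine mul_le_mul_of_nonneg_right ?_ (hw κ)
    refine (norm_sum_le _ _).trans ?_
    rw [hLdef]
    simp only
    exact le_of_eq (Finset.sum_congr rfl fun ρ _ => hcoefeq σ κ ρ)
  -- core bound for L
  have hLcore : ∀ σ ∈ S, ∑ ρ ∈ σ.powerset, |θ ρ σ| * ((m ρ)⁻¹ * γ ρ) ≤ D := by
    intro σ hσ
    have hcardσ : (0:ℝ) < (σ.card : ℝ) := by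
      exact_mod_cast Finset.card_pos.2 (hS σ hσ)
    calc ∑ ρ ∈ σ.powerset, |θ ρ σ| * ((m ρ)⁻¹ * γ ρ)
        ≤ ∑ ρ ∈ σ.powerset, |θ ρ σ| * (D / (σ.card : ℝ)) := by
          refine Finset.sum_le_sum fun ρ _ => ?_
          by_cases h : θ ρ σ = 0
          · simp [h]
          · have hρS := (hθS ρ σ h).1
            have hcc : ((ρ.card : ℝ) + 1) = (σ.card : ℝ) := by
              exact_mod_cast (hcard ρ σ h).symm
            refine mul_le_mul_of_nonneg_left ?_ (abs_nonneg _)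
            rw [← hcc]
            exact hγle ρ hρS
      _ = (D / (σ.card : ℝ)) * ∑ ρ ∈ σ.powerset, |θ ρ σ| := by
          rw [← Finset.sum_mul, mul_comm]
      _ ≤ (D / (σ.card : ℝ)) * (σ.card : ℝ) := by
          exact mul_le_mul_of_nonneg_left (count_le' θ hθ_val hθ_ne σ _)
            (div_nonneg hD0 hcardσ.le)
      _ = D := div_mul_cancel₀ D hcardσ.ne'
  -- row bound for L
  have hLrow : ∀ σ ∈ S, ∑ κ ∈ F, L σ κ ≤ D := by
    intro σ hσ
    have e : ∑ κ ∈ F, L σ κ =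
        ∑ ρ ∈ σ.powerset, |θ ρ σ| * ((m ρ)⁻¹ * ∑ κ ∈ F, |θ ρ κ| * m κ) := by
      rw [hLdef]
      simp only
      rw [Finset.sum_comm]
      exact Finset.sum_congr rfl fun ρ _ => by
        rw [Finset.mul_sum, Finset.mul_sum]
    rw [e]
    refine (Finset.sum_le_sum fun ρ _ => ?_).trans (hLcore σ hσ)
    by_cases h : θ ρ σ = 0
    · simp [h]
    · have hρS := (hθS ρ σ h).1
      refine mul_le_mul_of_nonneg_left (mul_le_mul_of_nonneg_left ?_
        (inv_nonneg.2 (hm ρ hρS).le)) (abs_nonneg _)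
      exact Summable.sum_le_tsum F (fun τ _ => hterm0 ρ τ) (hloc ρ hρS)
  -- column bound for L
  have hLid : ∀ κ, ∀ σ : {σ : Finset V // σ ∈ S}, m σ.1 * L σ.1 κ =
      ∑ ρ ∈ κ.powerset, (|θ ρ κ| * m κ) * ((m ρ)⁻¹ * (|θ ρ σ.1| * m σ.1)) := by
    intro κ σ
    have e1 : m σ.1 * L σ.1 κ =
        ∑ ρ ∈ σ.1.powerset, (|θ ρ κ| * m κ) * ((m ρ)⁻¹ * (|θ ρ σ.1| * m σ.1)) := by
      rw [hLdef]
      simp only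
      rw [Finset.mul_sum]
      exact Finset.sum_congr rfl fun ρ _ => by ring
    rw [e1]
    apply sum_eq_sum_of_support'
    intro ρ hρ
    have h1 : θ ρ σ.1 ≠ 0 := fun h => hρ (by simp [h])
    have h2 : θ ρ κ ≠ 0 := fun h => hρ (by simp [h])
    exact ⟨fun _ => Finset.mem_powerset.2 (hθS ρ κ h2).2.2.1,
      fun _ => Finset.mem_powerset.2 (hθS ρ σ.1 h1).2.2.1⟩
  have hLcol_sum : ∀ κ ∈ F, ∀ u : Finset {σ : Finset V // σ ∈ S},
      ∑ σ ∈ u, m σ.1 * L σ.1 κ ≤ D * m κ := by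
    intro κ hκ u
    have hκS := hFS κ hκ
    have e : ∑ σ ∈ u, m σ.1 * L σ.1 κ =
        ∑ ρ ∈ κ.powerset, (|θ ρ κ| * m κ) * ((m ρ)⁻¹ * ∑ σ ∈ u, |θ ρ σ.1| * m σ.1) := by
      rw [Finset.sum_congr rfl (fun σ _ => hLid κ σ), Finset.sum_comm]
      exact Finset.sum_congr rfl fun ρ _ => by
        rw [Finset.mul_sum, Finset.mul_sum]
    rw [e]
    have step : ∑ ρ ∈ κ.powerset, (|θ ρ κ| * m κ) * ((m ρ)⁻¹ * ∑ σ ∈ u, |θ ρ σ.1| * m σ.1) ≤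
        ∑ ρ ∈ κ.powerset, (|θ ρ κ| * m κ) * ((m ρ)⁻¹ * γ ρ) := by
      refine Finset.sum_le_sum fun ρ _ => ?_
      by_cases h : θ ρ κ = 0
      · simp [h]
      · have hρS := (hθS ρ κ h).1
        have himg : ∑ σ ∈ u, |θ ρ σ.1| * m σ.1 =
            ∑ σ' ∈ u.image Subtype.val, |θ ρ σ'| * m σ' := by
          rw [Finset.sum_image (fun x _ y _ hxy => Subtype.ext hxy)]
        refine mul_le_mul_of_nonneg_left (mul_le_mul_of_nonneg_left ?_
          (inv_nonneg.2 (hm ρ hρS).le)) (mul_nonneg (abs_nonneg _) (hm κ hκS).le)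
        rw [himg]
        exact Summable.sum_le_tsum _ (fun τ _ => hterm0 ρ τ) (hloc ρ hρS)
    refine step.trans ?_
    have e2 : ∑ ρ ∈ κ.powerset, (|θ ρ κ| * m κ) * ((m ρ)⁻¹ * γ ρ) =
        m κ * ∑ ρ ∈ κ.powerset, |θ ρ κ| * ((m ρ)⁻¹ * γ ρ) := by
      rw [Finset.mul_sum]
      exact Finset.sum_congr rfl fun ρ _ => by ring
    rw [e2, mul_comm D (m κ)]
    exact mul_le_mul_of_nonneg_left (hLcore κ hκS) (hm κ hκS).le
  have hLcolS : ∀ κ ∈ F, Summable (fun σ : {σ : Finset V // σ ∈ S} => m σ.1 * L σ.1 κ) := by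
    intro κ hκ
    exact summable_of_sum_le (fun σ => mul_nonneg (hm _ σ.2).le (hL0 _ _)) (hLcol_sum κ hκ)
  have hLcol : ∀ κ ∈ F, (∑' σ : {σ : Finset V // σ ∈ S}, m σ.1 * L σ.1 κ) ≤ D * m κ :=
    fun κ hκ => Summable.tsum_le_of_sum_le (hLcolS κ hκ) (hLcol_sum κ hκ)
  -- combined kernel facts
  have hKL : ∀ σ κ, 0 ≤ K σ κ + L σ κ := fun σ κ => add_nonneg (hK σ κ) (hL0 σ κ)
  have hrow2 : ∀ σ ∈ S, ∑ κ ∈ F, (K σ κ + L σ κ) ≤ 2 * D := by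
    intro σ hσ
    rw [Finset.sum_add_distrib]
    linarith [hKrow σ hσ, hLrow σ hσ]
  have hcolS2 : ∀ κ ∈ F, Summable (fun σ : {σ : Finset V // σ ∈ S} =>
      m σ.1 * (K σ.1 κ + L σ.1 κ)) := by
    intro κ hκ
    exact Summable.congr ((hKcolS κ hκ).add (hLcolS κ hκ)) (fun σ => by ring)
  have hcol2 : ∀ κ ∈ F, (∑' σ : {σ : Finset V // σ ∈ S}, m σ.1 * (K σ.1 κ + L σ.1 κ)) ≤
      2 * D * m κ := by
    intro κ hκ
    have e : (∑' σ : {σ : Finset V // σ ∈ S}, m σ.1 * (K σ.1 κ + L σ.1 κ)) =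
        (∑' σ : {σ : Finset V // σ ∈ S}, m σ.1 * K σ.1 κ) +
        (∑' σ : {σ : Finset V // σ ∈ S}, m σ.1 * L σ.1 κ) := by
      rw [← Summable.tsum_add (hKcolS κ hκ) (hLcolS κ hκ)]
      exact tsum_congr fun σ => by ring
    rw [e]
    have h1 := hKcol κ hκ
    have h2 := hLcol κ hκ
    linarith
  have hA2 : ∀ σ ∈ S, ‖bdry m θ (cobdry θ ω) σ + cobdry θ (bdry m θ ω) σ‖ ≤
      ∑ κ ∈ F, (K σ κ + L σ κ) * w κ := by
    intro σ hσ
    refine (norm_add_le _ _).trans ?_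
    calc ‖bdry m θ (cobdry θ ω) σ‖ + ‖cobdry θ (bdry m θ ω) σ‖
        ≤ (∑ κ ∈ F, K σ κ * w κ) + ∑ κ ∈ F, L σ κ * w κ :=
          add_le_add (hAbound σ hσ) (hBbound σ hσ)
      _ = ∑ κ ∈ F, (K σ κ + L σ κ) * w κ := by
          rw [← Finset.sum_add_distrib]
          exact Finset.sum_congr rfl fun κ _ => by ring
  -- sup machinery
  have hbdd : BddAbove (Set.range fun τ : {τ : Finset V // τ ∈ S} => ‖ω τ.1‖) := by
    refine ⟨∑ κ ∈ F, w κ, ?_⟩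
    rintro x ⟨τ, rfl⟩
    show ‖ω τ.1‖ ≤ ∑ κ ∈ F, w κ
    by_cases h : τ.1 ∈ F
    · exact Finset.single_le_sum (fun κ _ => hw κ) h
    · rw [hωF τ.1 h, norm_zero]
      exact Finset.sum_nonneg fun κ _ => hw κ
  have hM0 : 0 ≤ ⨆ τ : {τ : Finset V // τ ∈ S}, ‖ω τ.1‖ :=
    Real.iSup_nonneg fun τ => norm_nonneg _
  have hwM : ∀ κ ∈ F, w κ ≤ ⨆ τ : {τ : Finset V // τ ∈ S}, ‖ω τ.1‖ :=
    fun κ hκ => le_ciSup hbdd (⟨κ, hFS κ hκ⟩ : {τ : Finset V // τ ∈ S})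
  have hsup : ∀ (Kk : Finset V → Finset V → ℝ), (∀ σ κ, 0 ≤ Kk σ κ) → ∀ (C : ℝ),
      (∀ σ ∈ S, ∑ κ ∈ F, Kk σ κ ≤ C) → ∀ (A : Finset V → ℂ),
      (∀ σ ∈ S, ‖A σ‖ ≤ ∑ κ ∈ F, Kk σ κ * w κ) →
      ∀ σ ∈ S, ‖A σ‖ ≤ C * ⨆ τ : {τ : Finset V // τ ∈ S}, ‖ω τ.1‖ := by
    intro Kk hKk C hrow A hA σ hσ
    calc ‖A σ‖ ≤ ∑ κ ∈ F, Kk σ κ * w κ := hA σ hσ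
      _ ≤ ∑ κ ∈ F, Kk σ κ * ⨆ τ : {τ : Finset V // τ ∈ S}, ‖ω τ.1‖ :=
          Finset.sum_le_sum fun κ hκ => mul_le_mul_of_nonneg_left (hwM κ hκ) (hKk σ κ)
      _ = (∑ κ ∈ F, Kk σ κ) * ⨆ τ : {τ : Finset V // τ ∈ S}, ‖ω τ.1‖ :=
          (Finset.sum_mul _ _ _).symm
      _ ≤ C * ⨆ τ : {τ : Finset V // τ ∈ S}, ‖ω τ.1‖ :=
          mul_le_mul_of_nonneg_right (hrow σ hσ) hM0
  -- ℓp machinery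
  have hlp : ∀ p : ℝ, 1 ≤ p → ∀ (Kk : Finset V → Finset V → ℝ), (∀ σ κ, 0 ≤ Kk σ κ) →
      ∀ (C : ℝ), 0 ≤ C → (∀ σ ∈ S, ∑ κ ∈ F, Kk σ κ ≤ C) →
      (∀ κ ∈ F, Summable (fun σ : {σ : Finset V // σ ∈ S} => m σ.1 * Kk σ.1 κ)) →
      (∀ κ ∈ F, (∑' σ : {σ : Finset V // σ ∈ S}, m σ.1 * Kk σ.1 κ) ≤ C * m κ) →
      ∀ (A : Finset V → ℂ), (∀ σ ∈ S, ‖A σ‖ ≤ ∑ κ ∈ F, Kk σ κ * w κ) →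
      (Summable fun σ : {σ : Finset V // σ ∈ S} => m σ.1 * ‖A σ.1‖ ^ p) ∧
      (∑' σ : {σ : Finset V // σ ∈ S}, m σ.1 * ‖A σ.1‖ ^ p) ^ (1/p) ≤
        C * (∑' τ : {τ : Finset V // τ ∈ S}, m τ.1 * ‖ω τ.1‖ ^ p) ^ (1/p) := by
    intro p hp Kk hKk C hC hrow hcolS hcol A hA
    have hp0 : (0:ℝ) < p := lt_of_lt_of_le one_pos hp
    obtain ⟨hsum, hle⟩ := schur' S m hm F w hw Kk hKk A hA C hC hrow hcolS hcol p hp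
    refine ⟨hsum, ?_⟩
    have hXnn : ∀ τ : {τ : Finset V // τ ∈ S}, 0 ≤ m τ.1 * ‖ω τ.1‖ ^ p :=
      fun τ => mul_nonneg (hm _ τ.2).le (Real.rpow_nonneg (norm_nonneg _) _)
    set s : Finset {τ : Finset V // τ ∈ S} :=
      F.attach.image (fun x => ⟨x.1, hFS x.1 x.2⟩) with hsdef
    have hXvanish : ∀ τ : {τ : Finset V // τ ∈ S}, τ ∉ s →
        m τ.1 * ‖ω τ.1‖ ^ p = 0 := by
      intro τ hτ
      have hnF : τ.1 ∉ F := by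
        intro h
        exact hτ (Finset.mem_image.2 ⟨⟨τ.1, h⟩, Finset.mem_attach _ _, Subtype.ext rfl⟩)
      rw [hωF τ.1 hnF, norm_zero, Real.zero_rpow hp0.ne', mul_zero]
    have hXsum : Summable (fun τ : {τ : Finset V // τ ∈ S} =>
        m τ.1 * ‖ω τ.1‖ ^ p) := summable_of_ne_finset_zero hXvanish
    have hX0 : 0 ≤ ∑' τ : {τ : Finset V // τ ∈ S}, m τ.1 * ‖ω τ.1‖ ^ p :=
      tsum_nonneg hXnn
    have hF0 : 0 ≤ ∑ κ ∈ F, m κ * w κ ^ p :=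
      Finset.sum_nonneg fun κ hκ => mul_nonneg (hm κ (hFS κ hκ)).le
        (Real.rpow_nonneg (hw κ) _)
    have hFX : ∑ κ ∈ F, m κ * w κ ^ p ≤
        ∑' τ : {τ : Finset V // τ ∈ S}, m τ.1 * ‖ω τ.1‖ ^ p := by
      have hinj : ∀ x ∈ F.attach, ∀ y ∈ F.attach,
          (⟨x.1, hFS x.1 x.2⟩ : {τ : Finset V // τ ∈ S}) = ⟨y.1, hFS y.1 y.2⟩ → x = y := by
        intro x _ y _ hxy
        injection hxy with hval
        exact Subtype.ext hval
      have e : ∑ κ ∈ F, m κ * w κ ^ p = ∑ τ ∈ s, m τ.1 * ‖ω τ.1‖ ^ p := by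
        rw [← Finset.sum_attach F (fun κ => m κ * w κ ^ p), hsdef, Finset.sum_image hinj]
      rw [e]
      exact Summable.sum_le_tsum s (fun τ _ => hXnn τ) hXsum
    calc (∑' σ : {σ : Finset V // σ ∈ S}, m σ.1 * ‖A σ.1‖ ^ p) ^ (1/p)
        ≤ (C ^ p * ∑ κ ∈ F, m κ * w κ ^ p) ^ (1/p) :=
          Real.rpow_le_rpow (tsum_nonneg fun σ => mul_nonneg (hm _ σ.2).le
            (Real.rpow_nonneg (norm_nonneg _) _)) hle (by positivity)
      _ ≤ (C ^ p * ∑' τ : {τ : Finset V // τ ∈ S}, m τ.1 * ‖ω τ.1‖ ^ p) ^ (1/p) :=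
          Real.rpow_le_rpow (mul_nonneg (Real.rpow_nonneg hC _) hF0)
            (mul_le_mul_of_nonneg_left hFX (Real.rpow_nonneg hC _)) (by positivity)
      _ = C * (∑' τ : {τ : Finset V // τ ∈ S}, m τ.1 * ‖ω τ.1‖ ^ p) ^ (1/p) := by
          rw [Real.mul_rpow (Real.rpow_nonneg hC _) hX0, ← Real.rpow_mul hC,
            mul_one_div_cancel hp0.ne', Real.rpow_one]
  refine ⟨?_, ?_, ?_, ?_⟩
  · intro p hp
    exact ⟨hlp p hp K hK D hD0 hKrow hKcolS hKcol (bdry m θ (cobdry θ ω)) hAbound,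
           hlp p hp L hL0 D hD0 hLrow hLcolS hLcol (cobdry θ (bdry m θ ω)) hBbound,
           hlp p hp (fun σ κ => K σ κ + L σ κ) hKL (2*D) (by linarith) hrow2 hcolS2 hcol2 (fun σ => bdry m θ (cobdry θ ω) σ + cobdry θ (bdry m θ ω) σ) hA2⟩
  · exact hsup K hK D hKrow (bdry m θ (cobdry θ ω)) hAbound
  · exact hsup L hL0 D hLrow (cobdry θ (bdry m θ ω)) hBbound
  · exact hsup (fun σ κ => K σ κ + L σ κ) hKL (2*D) hrow2 (fun σ => bdry m θ (cobdry θ ω) σ + cobdry θ (bdry m θ ω) σ) hA2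
end

section
/- Let V be a countable set, Σ a set of nonempty finite subsets of V, m : Σ → (0,∞) a weight, and θ an incidence function on Σ. Suppose for some p ∈ [1,∞) and N ≥ 0 the coboundary operator satisfies ∑_{σ∈Σ} m(σ)·|δω(σ)|^p ≤ N^p·∑_{τ∈Σ} m(τ)|ω(τ)|^p for every finitely supported ω : Σ → ℂ. Then γ(τ) := ∑_{σ≻τ} m(σ) ≤ N^p·m(τ) for every τ ∈ Σ; in particular sup_{τ∈Σ} γ(τ)/m(τ) < ∞. -/
/-- If the coboundary operator is bounded on weighted `ℓ^p`, i.e.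
`∑_σ m(σ)|δω(σ)|^p ≤ N^p·∑_τ m(τ)|ω(τ)|^p` for all finitely supported `ω` on `Σ`, then
`γ(τ) = ∑_{σ≻τ} m(σ) ≤ N^p·m(τ)` for every `τ ∈ Σ`. -/
theorem stmt18 {V : Type*} [Countable V] [DecidableEq V]
    (S : Set (Finset V)) (hS : ∀ σ ∈ S, σ.Nonempty)
    (m : Finset V → ℝ) (hm : ∀ σ ∈ S, 0 < m σ)
    (θ : Finset V → Finset V → ℝ)
    (hθ_val : ∀ τ σ, θ τ σ = 0 ∨ θ τ σ = 1 ∨ θ τ σ = -1)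
    (hθ_ne : ∀ τ σ, θ τ σ ≠ 0 ↔ τ ∈ S ∧ σ ∈ S ∧ τ ⊆ σ ∧ (σ \ τ).card = 1)
    (p : ℝ) (hp : 1 ≤ p) (N : ℝ) (hN : 0 ≤ N)
    (hbound : ∀ ω : Finset V → ℂ, (Function.support ω).Finite → (∀ τ, ω τ ≠ 0 → τ ∈ S) →
      (∑' σ : {σ : Finset V // σ ∈ S},
          ENNReal.ofReal (m σ.1 *
            ‖∑ τ ∈ σ.1.powerset, (θ τ σ.1 : ℂ) * ω τ‖ ^ p)) ≤
        ENNReal.ofReal (N ^ p) *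
          ∑' τ : {τ : Finset V // τ ∈ S}, ENNReal.ofReal (m τ.1 * ‖ω τ.1‖ ^ p)) :
    ∀ τ ∈ S,
      (∑' σ : {σ : Finset V // σ ∈ S}, ENNReal.ofReal (|θ τ σ.1| * m σ.1)) ≤
        ENNReal.ofReal (N ^ p * m τ) := by
  intro τ hτ
  classical
  have hp0 : p ≠ 0 := by positivity
  set ω : Finset V → ℂ := fun τ' => if τ' = τ then 1 else 0 with hω
  have hsupp : (Function.support ω).Finite := by
    apply Set.Finite.subset (Set.finite_singleton τ)
    intro x hx
    simp only [Function.mem_support, hω] at hx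
    by_contra h
    simp only [Set.mem_singleton_iff] at h
    simp [h] at hx
  have hsub : ∀ τ', ω τ' ≠ 0 → τ' ∈ S := by
    intro τ' h
    by_cases hc : τ' = τ
    · exact hc ▸ hτ
    · simp [hω, hc] at h
  have key := hbound ω hsupp hsub
  have hinner : ∀ σ : Finset V, (∑ τ' ∈ σ.powerset, (θ τ' σ : ℂ) * ω τ') = (θ τ σ : ℂ) := by
    intro σ
    by_cases hτσ : τ ⊆ σ
    · rw [Finset.sum_eq_single τ]
      · simp [hω]
      · intro b _ hbτ; simp [hω, hbτ]
      · intro h; exact absurd (Finset.mem_powerset.mpr hτσ) h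
    · have hz : θ τ σ = 0 := by
        by_contra h; exact hτσ ((hθ_ne τ σ).mp h).2.2.1
      rw [hz]
      apply (Finset.sum_eq_zero _).trans (by simp)
      intro b hb
      by_cases hbτ : b = τ
      · subst hbτ; exact absurd (Finset.mem_powerset.mp hb) hτσ
      · simp [hω, hbτ]
  have hLHS : (∑' σ : {σ : Finset V // σ ∈ S},
      ENNReal.ofReal (m σ.1 *
        ‖∑ τ' ∈ σ.1.powerset, (θ τ' σ.1 : ℂ) * ω τ'‖ ^ p)) =
      ∑' σ : {σ : Finset V // σ ∈ S}, ENNReal.ofReal (|θ τ σ.1| * m σ.1) := by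
    apply tsum_congr
    intro σ
    rw [hinner σ.1]
    congr 1
    rcases hθ_val τ σ.1 with h | h | h <;>
      simp [h, Real.one_rpow, Real.zero_rpow hp0, mul_comm]
  have hRHS : (∑' τ' : {τ' : Finset V // τ' ∈ S},
      ENNReal.ofReal (m τ'.1 * ‖ω τ'.1‖ ^ p)) = ENNReal.ofReal (m τ) := by
    rw [tsum_eq_single (⟨τ, hτ⟩ : {τ' : Finset V // τ' ∈ S})]
    · simp [hω, Real.one_rpow]
    · intro b hb
      have hb' : b.1 ≠ τ := fun h => hb (Subtype.ext h)
      simp [hω, hb', Real.zero_rpow hp0]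
  rw [hLHS, hRHS] at key
  refine key.trans_eq ?_
  rw [← ENNReal.ofReal_mul (Real.rpow_nonneg hN p)]
end
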